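/- arXiv:2401.10435 — 8 statements merged into one kernel-verified Lean document; each statement's English description precedes it below -/
import Mathlib

section
/- If Re(c-a-b) > 0, then lim_{x→1⁻} F(a,b;c;x) = Γ(c)Γ(c-a-b)/(Γ(c-a)Γ(c-b)). -/
noncomputable def gaussHF (a b c x : ℝ) : ℝ :=
  ∑' n : ℕ, ((ascPochhammer ℝ n).eval a * (ascPochhammer ℝ n).eval b /
    ((ascPochhammer ℝ n).eval c * n.factorial)) * x ^ n

/-!
Write `F(c) = ∑ₙ tₙ(c)` for the hypergeometric series at `x = 1`. It converges because the ratio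
`tₙ₊₁ / tₙ` is eventually below `(n / (n + 1)) ^ (1 + δ)` with `δ = (c - a - b) / 2`, so that
`tₙ = O(n ^ (-1 - δ))`. Telescoping the contiguous relation
`c (c - a - b) tₙ(c) - (c - a) (c - b) tₙ(c + 1) = c (n tₙ(c) - (n + 1) tₙ₊₁(c))`
gives `c (c - a - b) F(c) = (c - a) (c - b) F(c + 1)`, hence `F(c) = Pₘ F(c + m)` with `Pₘ` a finite
product of ratios of linear factors. As `m → ∞`, `F(c + m) → 1` by dominated convergence, while `Pₘ`
is a quotient of Euler's products `GammaSeq` and tends to `Γ(c) Γ(c-a-b) / (Γ(c-a) Γ(c-b))`.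
Abel's theorem carries the value `F(c)` over to the limit `x → 1⁻`.
-/

open Filter Finset Polynomial Topology

section Pochhammer

lemma abs_ascPochhammer_eval_le (x : ℝ) (n : ℕ) :
    |(ascPochhammer ℝ n).eval x| ≤ (ascPochhammer ℝ n).eval |x| := by
  induction n with
  | zero => simp
  | succ n ih =>
    rw [ascPochhammer_succ_eval, ascPochhammer_succ_eval, abs_mul]
    refine mul_le_mul ih ((abs_add_le _ _).trans ?_) (abs_nonneg _) ((abs_nonneg _).trans ih)
    simp

lemma ascPochhammer_eval_le_of_le {x y : ℝ} (hx : 0 < x) (hxy : x ≤ y) (n : ℕ) :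
    (ascPochhammer ℝ n).eval x ≤ (ascPochhammer ℝ n).eval y := by
  induction n with
  | zero => simp
  | succ n ih =>
    rw [ascPochhammer_succ_eval, ascPochhammer_succ_eval]
    exact mul_le_mul ih (by linarith) (by positivity) ((ascPochhammer_pos n x hx).le.trans ih)

lemma ascPochhammer_eval_ne_zero {x : ℝ} (hx : ∀ k : ℕ, x + k ≠ 0) (n : ℕ) :
    (ascPochhammer ℝ n).eval x ≠ 0 := by
  rw [Ne, ascPochhammer_eval_eq_zero_iff]
  rintro ⟨k, -, hk⟩
  exact hx k (by linarith)

lemma tendsto_ascPochhammer_eval_atTop {n : ℕ} (hn : n ≠ 0) :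
    Tendsto (fun x : ℝ => (ascPochhammer ℝ n).eval x) atTop atTop := by
  refine tendsto_atTop_of_leadingCoeff_nonneg _ ?_
    (by simp [(monic_ascPochhammer ℝ n).leadingCoeff])
  rw [degree_eq_natDegree (monic_ascPochhammer ℝ n).ne_zero, ascPochhammer_natDegree]
  exact_mod_cast Nat.pos_of_ne_zero hn

end Pochhammer

namespace Real

lemma tendsto_GammaSeq_inv (s : ℝ) :
    Tendsto (fun n => (GammaSeq s n)⁻¹) atTop (𝓝 (Gamma s)⁻¹) := by
  by_cases hs : Gamma s = 0
  · obtain ⟨k, hk⟩ := (Gamma_eq_zero_iff s).1 hs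
    rw [hs, inv_zero]
    refine tendsto_const_nhds.congr' ?_
    filter_upwards [eventually_ge_atTop k] with n hn
    have : ∏ j ∈ range (n + 1), (s + j) = 0 :=
      prod_eq_zero (mem_range.2 (Nat.lt_succ_of_le hn)) (by rw [hk]; ring)
    simp [GammaSeq, this]
  · exact (GammaSeq_tendsto_Gamma s).inv₀ hs

lemma prod_range_succ_div_eq_GammaSeq {x y z w : ℝ} (hxw : x + w = y + z)
    (hx : ∀ j : ℕ, x + j ≠ 0) (hw : ∀ j : ℕ, w + j ≠ 0) {n : ℕ} (hn : n ≠ 0) :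
    ∏ j ∈ range (n + 1), ((y + j) * (z + j) / ((x + j) * (w + j))) =
      GammaSeq x n * GammaSeq w n * (GammaSeq y n)⁻¹ * (GammaSeq z n)⁻¹ := by
  have hn₀ : (0 : ℝ) < n := by exact_mod_cast Nat.pos_of_ne_zero hn
  have hpow : (n : ℝ) ^ x * (n : ℝ) ^ w = (n : ℝ) ^ y * (n : ℝ) ^ z := by
    rw [← rpow_add hn₀, ← rpow_add hn₀, hxw]
  have hX : ∏ j ∈ range (n + 1), (x + (j : ℝ)) ≠ 0 := prod_ne_zero_iff.2 fun j _ => hx j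
  have hW : ∏ j ∈ range (n + 1), (w + (j : ℝ)) ≠ 0 := prod_ne_zero_iff.2 fun j _ => hw j
  have hy : (n : ℝ) ^ y ≠ 0 := (rpow_pos_of_pos hn₀ y).ne'
  have hz : (n : ℝ) ^ z ≠ 0 := (rpow_pos_of_pos hn₀ z).ne'
  have hf : (n.factorial : ℝ) ≠ 0 := by positivity
  simp only [GammaSeq, inv_div, prod_div_distrib, prod_mul_distrib]
  field_simp
  rw [mul_assoc _ (_ ^ x), hpow, mul_assoc]

lemma tendsto_prod_range_div_Gamma {x y z w : ℝ} (hxw : x + w = y + z)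
    (hx : ∀ j : ℕ, x + j ≠ 0) (hw : ∀ j : ℕ, w + j ≠ 0) :
    Tendsto (fun m => ∏ j ∈ range m, ((y + j) * (z + j) / ((x + j) * (w + j)))) atTop
      (𝓝 (Gamma x * Gamma w / (Gamma y * Gamma z))) := by
  rw [← tendsto_add_atTop_iff_nat 1, div_eq_mul_inv, mul_inv, ← mul_assoc]
  refine ((((GammaSeq_tendsto_Gamma x).mul (GammaSeq_tendsto_Gamma w)).mul
    (tendsto_GammaSeq_inv y)).mul (tendsto_GammaSeq_inv z)).congr' ?_
  filter_upwards [eventually_ne_atTop 0] with n hn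
  exact (prod_range_succ_div_eq_GammaSeq hxw hx hw hn).symm

end Real

lemma tsum_sub_succ_of_tendsto {G : Type*} [AddCommGroup G] [TopologicalSpace G]
    [IsTopologicalAddGroup G] [T2Space G] {f : ℕ → G} {l : G}
    (hs : Summable fun n => f n - f (n + 1)) (hf : Tendsto f atTop (𝓝 l)) :
    ∑' n, (f n - f (n + 1)) = f 0 - l := by
  refine tendsto_nhds_unique hs.hasSum.tendsto_sum_nat ?_
  simp only [sum_range_sub']
  exact tendsto_const_nhds.sub hf

lemma isBigO_rpow_neg_of_eventually_mul_rpow_le {u : ℕ → ℝ} {p : ℝ}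
    (h : ∀ᶠ n in atTop, |u (n + 1)| * ((n + 1 : ℕ) : ℝ) ^ p ≤ |u n| * (n : ℝ) ^ p) :
    u =O[atTop] fun n => (n : ℝ) ^ (-p) := by
  obtain ⟨N, hN⟩ := eventually_atTop.1 (h.and (eventually_ge_atTop 1))
  have hmono : ∀ n, N ≤ n → |u n| * (n : ℝ) ^ p ≤ |u N| * (N : ℝ) ^ p := by
    intro n hn
    induction n, hn using Nat.le_induction with
    | base => rfl
    | succ n hn ih => exact (hN n hn).1.trans ih
  refine Asymptotics.IsBigO.of_bound (|u N| * (N : ℝ) ^ p) ?_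
  filter_upwards [eventually_ge_atTop N] with n hn
  have hn₀ : (0 : ℝ) < n := by exact_mod_cast (hN n hn).2
  rw [Real.norm_eq_abs, Real.norm_of_nonneg (by positivity), Real.rpow_neg hn₀.le,
    ← div_eq_mul_inv, le_div_iff₀ (by positivity)]
  exact hmono n hn

section Coefficients

noncomputable def gaussHFCoeff (a b c : ℝ) (n : ℕ) : ℝ :=
  (ascPochhammer ℝ n).eval a * (ascPochhammer ℝ n).eval b /
    ((ascPochhammer ℝ n).eval c * n.factorial)

variable {a b c : ℝ}

@[simp] lemma gaussHFCoeff_zero : gaussHFCoeff a b c 0 = 1 := by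
  simp [gaussHFCoeff]

lemma gaussHFCoeff_succ (hc : ∀ k : ℕ, c + k ≠ 0) (n : ℕ) :
    gaussHFCoeff a b c (n + 1) =
      gaussHFCoeff a b c n * ((a + n) * (b + n) / ((c + n) * (n + 1))) := by
  have := ascPochhammer_eval_ne_zero hc n
  have := hc n
  simp only [gaussHFCoeff, ascPochhammer_succ_eval, Nat.factorial_succ, Nat.cast_mul,
    Nat.cast_succ]
  field_simp

lemma gaussHFCoeff_add_one_right (hc : ∀ k : ℕ, c + k ≠ 0) (n : ℕ) :
    gaussHFCoeff a b (c + 1) n = gaussHFCoeff a b c n * (c / (c + n)) := by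
  have hpoch : c * (ascPochhammer ℝ n).eval (c + 1) = (ascPochhammer ℝ n).eval c * (c + n) := by
    rw [← ascPochhammer_succ_eval, ascPochhammer_succ_left, eval_mul, eval_comp]
    simp
  have hc₀ : c ≠ 0 := by simpa using hc 0
  have hcn := hc n
  have hP := ascPochhammer_eval_ne_zero hc n
  have hP₁ : (ascPochhammer ℝ n).eval (c + 1) ≠ 0 := fun h0 =>
    mul_ne_zero hP hcn (by rw [← hpoch, h0, mul_zero])
  simp only [gaussHFCoeff]
  field_simp
  linear_combination -(eval a (ascPochhammer ℝ n) * eval b (ascPochhammer ℝ n)) * hpoch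

lemma gaussHFCoeff_contiguous (hc : ∀ k : ℕ, c + k ≠ 0) (n : ℕ) :
    c * (c - a - b) * gaussHFCoeff a b c n - (c - a) * (c - b) * gaussHFCoeff a b (c + 1) n =
      c * (n * gaussHFCoeff a b c n) - c * ((n + 1 : ℕ) * gaussHFCoeff a b c (n + 1)) := by
  have := hc n
  rw [gaussHFCoeff_add_one_right hc, gaussHFCoeff_succ hc]
  push_cast
  field_simp
  ring

lemma eventually_mul_div_le_rpow (h : 0 < c - a - b) :
    ∀ᶠ n : ℕ in atTop, 0 < (a + n) * (b + n) / ((c + n) * (n + 1)) ∧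
      (a + n) * (b + n) / ((c + n) * (n + 1)) ≤ ((n : ℝ) / (n + 1)) ^ (1 + (c - a - b) / 2) := by
  set δ := (c - a - b) / 2
  have hδ : 0 < δ := by positivity
  have hn := tendsto_natCast_atTop_atTop (R := ℝ)
  filter_upwards [hn.eventually_gt_atTop (-a), hn.eventually_gt_atTop (-b),
    hn.eventually_gt_atTop (-c), hn.eventually_ge_atTop ((a * b + δ * c) / δ + 1)]
    with n ha hb hc hlarge
  have hn₀ : (0 : ℝ) < n + 1 := by positivity
  refine ⟨div_pos (by nlinarith) (by nlinarith), ?_⟩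
  -- Bernoulli's inequality `1 + p s ≤ (1 + s) ^ p` at `s = -1 / (n + 1)`
  have hbern := one_add_mul_self_le_rpow_one_add (s := -(1 / (n + 1)))
    (by rw [neg_le_neg_iff, div_le_one hn₀]; linarith) (p := 1 + δ) (by linarith)
  rw [show 1 + -(1 / ((n : ℝ) + 1)) = n / (n + 1) by field_simp; ring] at hbern
  refine le_trans ?_ hbern
  rw [div_le_iff₀ (by nlinarith)]
  have hab : a * b + δ * c ≤ δ * n := (div_le_iff₀' hδ).1 (by linarith)
  have hδ₂ : c - a - b = 2 * δ := by ring
  have expand : (1 + (1 + δ) * -(1 / ((n : ℝ) + 1))) * ((c + n) * (n + 1)) = (c + n) * (n - δ) := by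
    field_simp
    ring
  rw [expand]
  linear_combination hab + (n : ℝ) * hδ₂

lemma gaussHFCoeff_isBigO (hc : ∀ k : ℕ, c + k ≠ 0) (h : 0 < c - a - b) :
    gaussHFCoeff a b c =O[atTop] fun n => (n : ℝ) ^ (-(1 + (c - a - b) / 2)) := by
  refine isBigO_rpow_neg_of_eventually_mul_rpow_le ?_
  filter_upwards [eventually_mul_div_le_rpow h] with n ⟨hpos, hle⟩
  calc |gaussHFCoeff a b c (n + 1)| * ((n + 1 : ℕ) : ℝ) ^ (1 + (c - a - b) / 2)
      = |gaussHFCoeff a b c n| * ((a + n) * (b + n) / ((c + n) * (n + 1))) *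
          ((n + 1 : ℕ) : ℝ) ^ (1 + (c - a - b) / 2) := by
        rw [gaussHFCoeff_succ hc, abs_mul, abs_of_pos hpos]
    _ ≤ |gaussHFCoeff a b c n| * ((n : ℝ) / (n + 1)) ^ (1 + (c - a - b) / 2) *
          ((n + 1 : ℕ) : ℝ) ^ (1 + (c - a - b) / 2) := by gcongr
    _ = |gaussHFCoeff a b c n| * (n : ℝ) ^ (1 + (c - a - b) / 2) := by
        rw [mul_assoc, ← Real.mul_rpow (by positivity) (by positivity)]
        push_cast
        rw [div_mul_cancel₀ _ (by positivity)]

lemma summable_gaussHFCoeff (hc : ∀ k : ℕ, c + k ≠ 0) (h : 0 < c - a - b) :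
    Summable (gaussHFCoeff a b c) :=
  summable_of_isBigO_nat (Real.summable_nat_rpow.2 (by linarith)) (gaussHFCoeff_isBigO hc h)

lemma tendsto_natCast_mul_gaussHFCoeff (hc : ∀ k : ℕ, c + k ≠ 0) (h : 0 < c - a - b) :
    Tendsto (fun n : ℕ => n * gaussHFCoeff a b c n) atTop (𝓝 0) := by
  refine ((Asymptotics.isBigO_refl (fun n : ℕ => (n : ℝ)) atTop).mul
    (gaussHFCoeff_isBigO hc h)).trans_tendsto ?_
  have hlim := (tendsto_rpow_neg_atTop (y := (c - a - b) / 2) (by linarith)).comp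
    (tendsto_natCast_atTop_atTop (R := ℝ))
  refine hlim.congr' ?_
  filter_upwards [eventually_ge_atTop 1] with n hn
  have hn₀ : (0 : ℝ) < n := by exact_mod_cast hn
  rw [Function.comp_apply, ← Real.rpow_one_add' hn₀.le (by linarith)]
  ring_nf

lemma tsum_gaussHFCoeff_contiguous (hc : ∀ k : ℕ, c + k ≠ 0) (h : 0 < c - a - b) :
    c * (c - a - b) * ∑' n, gaussHFCoeff a b c n =
      (c - a) * (c - b) * ∑' n, gaussHFCoeff a b (c + 1) n := by
  have hc₁ : ∀ k : ℕ, c + 1 + k ≠ 0 := fun k => by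
    simpa [add_assoc, add_comm (1 : ℝ)] using hc (k + 1)
  have hs₀ := (summable_gaussHFCoeff hc h).mul_left (c * (c - a - b))
  have hs₁ := (summable_gaussHFCoeff (a := a) (b := b) hc₁ (by linarith)).mul_left
    ((c - a) * (c - b))
  have htel := tsum_sub_succ_of_tendsto (f := fun n : ℕ => c * (n * gaussHFCoeff a b c n))
    (by simpa only [gaussHFCoeff_contiguous hc] using hs₀.sub hs₁)
    (by simpa using (tendsto_natCast_mul_gaussHFCoeff hc h).const_mul c)
  simp only [← gaussHFCoeff_contiguous hc, Nat.cast_zero, zero_mul, mul_zero, sub_zero] at htel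
  rw [hs₀.tsum_sub hs₁, tsum_mul_left, tsum_mul_left] at htel
  exact sub_eq_zero.1 htel

lemma tsum_gaussHFCoeff_eq_prod_mul (hc : ∀ k : ℕ, c + k ≠ 0) (h : 0 < c - a - b) (m : ℕ) :
    ∑' n, gaussHFCoeff a b c n =
      (∏ j ∈ range m, ((c - a + j) * (c - b + j) / ((c + j) * (c - a - b + j)))) *
        ∑' n, gaussHFCoeff a b (c + m) n := by
  induction m with
  | zero => simp
  | succ m ih =>
    have hcm : ∀ k : ℕ, c + m + k ≠ 0 := fun k => by simpa [add_assoc] using hc (m + k)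
    have hm : 0 < c + m - a - b := by linarith [(Nat.cast_nonneg m : (0 : ℝ) ≤ m)]
    have hden : (c + m) * (c + m - a - b) ≠ 0 := mul_ne_zero (by simpa using hcm 0) hm.ne'
    have hstep : ∑' n, gaussHFCoeff a b (c + m) n =
        (c + m - a) * (c + m - b) / ((c + m) * (c + m - a - b)) *
          ∑' n, gaussHFCoeff a b (c + m + 1) n := by
      rw [div_mul_eq_mul_div, eq_div_iff hden]
      linear_combination tsum_gaussHFCoeff_contiguous hcm hm
    rw [ih, hstep, prod_range_succ, show c + ((m + 1 : ℕ) : ℝ) = c + m + 1 by push_cast; ring]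
    ring

lemma abs_gaussHFCoeff_le {x y : ℝ} (hx : 0 < x) (hxy : x ≤ y) (n : ℕ) :
    |gaussHFCoeff a b y n| ≤ gaussHFCoeff |a| |b| x n := by
  have hPx := ascPochhammer_pos n x hx
  have hPy := ascPochhammer_pos n y (hx.trans_le hxy)
  have hPa := (abs_nonneg _).trans (abs_ascPochhammer_eval_le a n)
  have hPb := (abs_nonneg _).trans (abs_ascPochhammer_eval_le b n)
  rw [gaussHFCoeff, gaussHFCoeff, abs_div, abs_mul, abs_of_pos (mul_pos hPy (by positivity))]
  gcongr
  · exact abs_ascPochhammer_eval_le a n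
  · exact abs_ascPochhammer_eval_le b n
  · exact ascPochhammer_eval_le_of_le hx hxy n

lemma tendsto_gaussHFCoeff_add_nat (a b c : ℝ) (n : ℕ) :
    Tendsto (fun m : ℕ => gaussHFCoeff a b (c + m) n) atTop (𝓝 (if n = 0 then 1 else 0)) := by
  rcases eq_or_ne n 0 with rfl | hn
  · simp
  rw [if_neg hn]
  have hden : Tendsto (fun m : ℕ => (ascPochhammer ℝ n).eval (c + m) * n.factorial) atTop atTop :=
    ((tendsto_ascPochhammer_eval_atTop hn).comp
      (tendsto_atTop_add_const_left _ c tendsto_natCast_atTop_atTop)).atTop_mul_const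
      (by positivity)
  exact tendsto_const_nhds.div_atTop hden

lemma tendsto_tsum_gaussHFCoeff_add_nat (a b c : ℝ) :
    Tendsto (fun m : ℕ => ∑' n, gaussHFCoeff a b (c + m) n) atTop (𝓝 1) := by
  obtain ⟨m₀, hm₀⟩ := exists_nat_gt (|a| + |b| - c)
  have hx : 0 < c + m₀ := by linarith [abs_nonneg a, abs_nonneg b]
  have hbound : Summable (gaussHFCoeff |a| |b| (c + m₀)) :=
    summable_gaussHFCoeff (fun k => by positivity) (by linarith)
  have hdom : ∀ᶠ m : ℕ in atTop, ∀ n,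
      ‖gaussHFCoeff a b (c + m) n‖ ≤ gaussHFCoeff |a| |b| (c + m₀) n := by
    filter_upwards [eventually_ge_atTop m₀] with m hm n
    exact abs_gaussHFCoeff_le hx (by gcongr) n
  simpa using
    tendsto_tsum_of_dominated_convergence hbound (tendsto_gaussHFCoeff_add_nat a b c) hdom

theorem tsum_gaussHFCoeff_eq_Gamma (hc : ∀ k : ℕ, c + k ≠ 0) (h : 0 < c - a - b) :
    ∑' n, gaussHFCoeff a b c n =
      Real.Gamma c * Real.Gamma (c - a - b) / (Real.Gamma (c - a) * Real.Gamma (c - b)) := by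
  have hw : ∀ j : ℕ, c - a - b + j ≠ 0 := fun j => by positivity
  have hlim := (Real.tendsto_prod_range_div_Gamma (y := c - a) (z := c - b) (by ring) hc hw).mul
    (tendsto_tsum_gaussHFCoeff_add_nat a b c)
  rw [mul_one] at hlim
  exact tendsto_nhds_unique
    (tendsto_const_nhds.congr (tsum_gaussHFCoeff_eq_prod_mul hc h)) hlim

end Coefficients

theorem stmt_1 (a b c : ℝ) (hc : ∀ n : ℕ, c ≠ -(n : ℝ)) (h : 0 < c - a - b) :
    Filter.Tendsto (fun x => gaussHF a b c x) (nhdsWithin 1 (Set.Iio 1))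
      (nhds (Real.Gamma c * Real.Gamma (c - a - b) /
        (Real.Gamma (c - a) * Real.Gamma (c - b)))) := by
  have hc' : ∀ k : ℕ, c + k ≠ 0 := fun k hk => hc k (eq_neg_of_add_eq_zero_left hk)
  rw [← tsum_gaussHFCoeff_eq_Gamma hc' h]
  exact Real.tendsto_tsum_powerSeries_nhdsWithin_lt
    (summable_gaussHFCoeff hc' h).hasSum.tendsto_sum_nat
end

section
/- Let c > 0, a ≤ c, b ≤ c and ab ≤ 0. Then the function x ↦ F(a,b;c;x) is decreasing on (0,1). Similarly, if instead ab ≥ 0 (with c > 0, a ≤ c, b ≤ c), then x ↦ F(a,b;c;x) is increasing on (0,1). -/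
open Filter Topology Set

theorem ascPochhammer_succ_eval_left {S : Type*} [CommSemiring S] (n : ℕ) (s : S) :
    (ascPochhammer S (n + 1)).eval s = s * (ascPochhammer S n).eval (s + 1) := by
  simp [ascPochhammer_succ_left, Polynomial.eval_comp]

theorem ascPochhammer_eval_nonneg {S : Type*} [Semiring S] [PartialOrder S] [IsOrderedRing S]
    (n : ℕ) {s : S} (hs : 0 ≤ s) : 0 ≤ (ascPochhammer S n).eval s := by
  induction n with
  | zero => simp
  | succ n ih => rw [ascPochhammer_succ_eval]; exact mul_nonneg ih (by positivity)

theorem Real.forall_of_forall_nonneg_of_add_one {P : ℝ → Prop} (base : ∀ a, 0 ≤ a → P a)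
    (step : ∀ a < 0, P (a + 1) → P a) (a : ℝ) : P a := by
  suffices ∀ n : ℕ, ∀ a : ℝ, -n ≤ a → P a from
    this ⌈-a⌉₊ a (by linarith [Nat.le_ceil (-a)])
  intro n
  induction n with
  | zero => simpa using base
  | succ n ih =>
    intro a ha
    rcases le_or_gt 0 a with h | h
    · exact base a h
    · exact step a h (ih (a + 1) (by push_cast at ha; linarith))

theorem tsum_mul_pow_eq_of_succ {p q u : ℕ → ℝ} {x : ℝ} (hq : Summable fun n => q n * x ^ n)
    (hu : Summable fun n => u n * x ^ n) (h0 : p 0 = q 0)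
    (hsucc : ∀ n, p (n + 1) = q (n + 1) + u n) :
    ∑' n, p n * x ^ n = ∑' n, q n * x ^ n + x * ∑' n, u n * x ^ n := by
  have hq' := (hasSum_nat_add_iff' 1).2 hq.hasSum
  have hterm : (fun n => p (n + 1) * x ^ (n + 1)) =
      fun n => q (n + 1) * x ^ (n + 1) + x * (u n * x ^ n) := by
    ext n; rw [hsucc, pow_succ]; ring
  have hshift := hq'.add (hu.hasSum.mul_left x)
  rw [← hterm, show ∀ Q U : ℝ, Q - ∑ i ∈ Finset.range 1, q i * x ^ i + x * U =
      Q + x * U - ∑ i ∈ Finset.range 1, p i * x ^ i by intro Q U; simp [h0]; ring] at hshift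
  exact ((hasSum_nat_add_iff' 1).1 hshift).tsum_eq

theorem hasDerivAt_tsum_mul_pow {p : ℕ → ℝ} {r x : ℝ} (hx : |x| < r)
    (hp : Summable fun n => (n + 1) * |p (n + 1)| * r ^ n) :
    HasDerivAt (fun y => ∑' n, p n * y ^ n) (∑' n, (n + 1) * p (n + 1) * x ^ n) x := by
  have hr : 0 < r := (abs_nonneg x).trans_lt hx
  set u : ℕ → ℝ := fun n => n * |p n| * r ^ (n - 1)
  have hu : Summable u := (summable_nat_add_iff 1).1 (by simpa [u] using hp)
  have hbound : ∀ n, ∀ y ∈ Ioo (-r) r, ‖p n * (n * y ^ (n - 1))‖ ≤ u n := by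
    intro n y hy
    have hy' : |y| ≤ r := (abs_lt.2 hy).le
    rw [Real.norm_eq_abs, ← mul_assoc, mul_comm _ (n : ℝ), abs_mul, abs_mul, Nat.abs_cast,
      abs_pow]
    exact mul_le_mul_of_nonneg_left (pow_le_pow_left₀ (abs_nonneg y) hy' _) (by positivity)
  have hderiv := hasDerivAt_tsum_of_isPreconnected hu isOpen_Ioo isPreconnected_Ioo
    (fun n y _ => (hasDerivAt_pow n y).const_mul (p n)) hbound (y₀ := 0) (by simpa using hr)
    (summable_of_ne_finset_zero (s := {0}) (by simp_all)) (abs_lt.1 hx)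
  refine hderiv.congr_deriv ?_
  rw [(Summable.of_norm_bounded hu (hbound · x (abs_lt.1 hx))).tsum_eq_zero_add]
  simp only [Nat.cast_zero, zero_mul, mul_zero, zero_add, Nat.add_sub_cancel, Nat.cast_add,
    Nat.cast_one]
  exact tsum_congr fun n => by ring

noncomputable def gaussCoeff (a b c : ℝ) (n : ℕ) : ℝ :=
  (ascPochhammer ℝ n).eval a * (ascPochhammer ℝ n).eval b /
    ((ascPochhammer ℝ n).eval c * n.factorial)

theorem gaussHF_eq_tsum (a b c x : ℝ) :
    gaussHF a b c x = ∑' n, gaussCoeff a b c n * x ^ n := rfl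

theorem gaussCoeff_zero (a b c : ℝ) : gaussCoeff a b c 0 = 1 := by simp [gaussCoeff]

theorem gaussCoeff_comm (a b c : ℝ) : gaussCoeff a b c = gaussCoeff b a c := by
  ext n; simp only [gaussCoeff, mul_comm]

theorem gaussHF_comm (a b c x : ℝ) : gaussHF a b c x = gaussHF b a c x := by
  rw [gaussHF_eq_tsum, gaussHF_eq_tsum, gaussCoeff_comm]

theorem tendsto_gaussCoeff_ratio (a b c : ℝ) (hc : 0 < c) :
    Tendsto (fun n : ℕ => (a + n) * (b + n) / ((c + n) * (n + 1))) atTop (𝓝 1) := by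
  have ha := tendsto_add_mul_div_add_mul_atTop_nhds a 1 1 one_ne_zero
  have hb := tendsto_add_mul_div_add_mul_atTop_nhds b c 1 one_ne_zero
  have hab := ha.mul hb
  simp only [one_mul, div_one, mul_one] at hab
  refine hab.congr' ?_
  filter_upwards [eventually_gt_atTop 0] with n hn
  field_simp
  ring

section

variable {a b c x : ℝ}

theorem gaussCoeff_succ (hc : 0 < c) (n : ℕ) :
    gaussCoeff a b c (n + 1) =
      gaussCoeff a b c n * ((a + n) * (b + n) / ((c + n) * (n + 1))) := by
  have := ascPochhammer_pos n c hc
  have : (0 : ℝ) < c + n := by positivity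
  simp only [gaussCoeff, ascPochhammer_succ_eval, Nat.factorial_succ, Nat.cast_mul,
    Nat.cast_add, Nat.cast_one]
  field_simp

theorem succ_mul_gaussCoeff_succ (hc : 0 < c) (n : ℕ) :
    (n + 1) * gaussCoeff a b c (n + 1) = a * b / c * gaussCoeff (a + 1) (b + 1) (c + 1) n := by
  have := ascPochhammer_pos n (c + 1) (by linarith)
  simp only [gaussCoeff, ascPochhammer_succ_eval_left, Nat.factorial_succ, Nat.cast_mul,
    Nat.cast_add, Nat.cast_one]
  field_simp

theorem gaussCoeff_succ_eq_contiguous (hc : 0 < c) (n : ℕ) :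
    gaussCoeff a b c (n + 1) = gaussCoeff (a + 1) b c (n + 1)
      + (-gaussCoeff (a + 1) b c n + (c - b) / c * gaussCoeff (a + 1) b (c + 1) n) := by
  have := ascPochhammer_pos n c hc
  have : (0 : ℝ) < c + n := by positivity
  have hshift :
      (ascPochhammer ℝ n).eval (c + 1) = (ascPochhammer ℝ n).eval c * (c + n) / c := by
    rw [eq_div_iff hc.ne', mul_comm, ← ascPochhammer_succ_eval_left, ascPochhammer_succ_eval]
  simp only [gaussCoeff, ascPochhammer_succ_eval_left _ a, ascPochhammer_succ_eval _ b,
    ascPochhammer_succ_eval _ (a + 1), ascPochhammer_succ_eval _ c, hshift, Nat.factorial_succ,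
    Nat.cast_mul, Nat.cast_add, Nat.cast_one]
  field_simp
  ring

theorem summable_gaussCoeff_mul_pow (hc : 0 < c) (hx : |x| < 1) :
    Summable fun n => gaussCoeff a b c n * x ^ n := by
  obtain ⟨ρ, hxρ, hρ⟩ := exists_between hx
  refine summable_of_ratio_norm_eventually_le hρ ?_
  have hratio := ((tendsto_gaussCoeff_ratio a b c hc).abs.mul_const |x|).eventually
    (gt_mem_nhds (by simpa using hxρ))
  filter_upwards [hratio] with n hn
  rw [gaussCoeff_succ hc, pow_succ, Real.norm_eq_abs, Real.norm_eq_abs]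
  calc |gaussCoeff a b c n * ((a + n) * (b + n) / ((c + n) * (n + 1))) * (x ^ n * x)|
      = |(a + n) * (b + n) / ((c + n) * (n + 1))| * |x| * |gaussCoeff a b c n * x ^ n| := by
        simp only [abs_mul]; ring
    _ ≤ ρ * |gaussCoeff a b c n * x ^ n| := by gcongr

theorem gaussHF_eq_contiguous (hc : 0 < c) (hx : |x| < 1) :
    gaussHF a b c x =
      (1 - x) * gaussHF (a + 1) b c x + (c - b) * x / c * gaussHF (a + 1) b (c + 1) x := by
  have h1 := summable_gaussCoeff_mul_pow (a := a + 1) (b := b) hc hx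
  have h2 := summable_gaussCoeff_mul_pow (a := a + 1) (b := b) (by linarith : 0 < c + 1) hx
  simp only [gaussHF_eq_tsum]
  rw [tsum_mul_pow_eq_of_succ h1
    ((h1.neg.add (h2.mul_left ((c - b) / c))).congr fun n => by ring)
    (by simp [gaussCoeff_zero]) (gaussCoeff_succ_eq_contiguous hc)]
  have hsplit : ∑' n, (-gaussCoeff (a + 1) b c n + (c - b) / c * gaussCoeff (a + 1) b (c + 1) n)
      * x ^ n = -∑' n, gaussCoeff (a + 1) b c n * x ^ n
        + (c - b) / c * ∑' n, gaussCoeff (a + 1) b (c + 1) n * x ^ n := by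
    rw [← tsum_neg, ← tsum_mul_left, ← h1.neg.tsum_add (h2.mul_left _)]
    exact tsum_congr fun n => by ring
  rw [hsplit]
  ring

theorem hasDerivAt_gaussHF (hc : 0 < c) (hx : |x| < 1) :
    HasDerivAt (gaussHF a b c) (a * b / c * gaussHF (a + 1) (b + 1) (c + 1) x) x := by
  obtain ⟨r, hxr, hr⟩ := exists_between hx
  have hr₀ : 0 ≤ r := (abs_nonneg x).trans hxr.le
  have hsum := (summable_gaussCoeff_mul_pow (a := a + 1) (b := b + 1) (by linarith : 0 < c + 1)
    (abs_lt.2 ⟨by linarith, hr⟩)).abs.mul_left |a * b / c|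
  have hderiv := hasDerivAt_tsum_mul_pow (p := gaussCoeff a b c) hxr <| hsum.congr fun n => by
    have h := congrArg (|·|) (succ_mul_gaussCoeff_succ (a := a) (b := b) hc n)
    simp only [abs_mul, abs_of_nonneg (by positivity : (0 : ℝ) ≤ n + 1)] at h
    rw [abs_mul, abs_of_nonneg (pow_nonneg hr₀ n), h]
    ring
  simp only [succ_mul_gaussCoeff_succ hc, mul_assoc, tsum_mul_left] at hderiv
  exact hderiv

theorem gaussHF_nonneg_of_nonneg (ha : 0 ≤ a) (hb : 0 ≤ b) (hc : 0 < c) (hx : 0 ≤ x) :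
    0 ≤ gaussHF a b c x := by
  refine tsum_nonneg fun n => mul_nonneg ?_ (pow_nonneg hx n)
  have := ascPochhammer_eval_nonneg n ha
  have := ascPochhammer_eval_nonneg n hb
  have := ascPochhammer_pos n c hc
  positivity

theorem gaussHF_nonneg_of_add_one_left (hc : 0 < c) (hbc : b ≤ c) (hx₀ : 0 ≤ x) (hx₁ : x < 1)
    (h₁ : 0 ≤ gaussHF (a + 1) b c x) (h₂ : 0 ≤ gaussHF (a + 1) b (c + 1) x) :
    0 ≤ gaussHF a b c x := by
  rw [gaussHF_eq_contiguous hc (abs_lt.2 ⟨by linarith, hx₁⟩)]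
  have : 0 ≤ (c - b) * x / c := div_nonneg (mul_nonneg (by linarith) hx₀) hc.le
  have : 0 ≤ 1 - x := by linarith
  positivity

theorem gaussHF_nonneg (hac : a ≤ c) (hbc : b ≤ c) (hc : 1 ≤ c) (hx₀ : 0 ≤ x)
    (hx₁ : x < 1) : 0 ≤ gaussHF a b c x := by
  have hleft : ∀ b, 0 ≤ b → ∀ a c, a ≤ c → b ≤ c → 1 ≤ c → 0 ≤ gaussHF a b c x := by
    intro b hb
    refine Real.forall_of_forall_nonneg_of_add_one
      (fun a ha c _ _ hc => gaussHF_nonneg_of_nonneg ha hb (by linarith) hx₀) ?_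
    intro a ha ih c hac hbc hc
    exact gaussHF_nonneg_of_add_one_left (by linarith) hbc hx₀ hx₁
      (ih c (by linarith) hbc hc) (ih (c + 1) (by linarith) (by linarith) (by linarith))
  suffices h : ∀ b a c, a ≤ c → b ≤ c → 1 ≤ c → 0 ≤ gaussHF a b c x from
    h b a c hac hbc hc
  refine Real.forall_of_forall_nonneg_of_add_one hleft ?_
  intro b hb ih a c hac hbc hc
  rw [gaussHF_comm]
  refine gaussHF_nonneg_of_add_one_left (by linarith) hac hx₀ hx₁ ?_ ?_ <;> rw [gaussHF_comm]
  · exact ih a c hac (by linarith) hc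
  · exact ih a (c + 1) (by linarith) (by linarith) (by linarith)

end

theorem stmt_2 (a b c : ℝ) (hc : 0 < c) (ha : a ≤ c) (hb : b ≤ c) :
    (a * b ≤ 0 → AntitoneOn (fun x => gaussHF a b c x) (Set.Ioo 0 1)) ∧
    (0 ≤ a * b → MonotoneOn (fun x => gaussHF a b c x) (Set.Ioo 0 1)) := by
  have hderAt : ∀ x ∈ Ioo (0 : ℝ) 1,
      HasDerivAt (gaussHF a b c) (a * b / c * gaussHF (a + 1) (b + 1) (c + 1) x) x :=
    fun x hx => hasDerivAt_gaussHF hc (abs_lt.2 ⟨by linarith [hx.1], hx.2⟩)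
  have hcont : ContinuousOn (gaussHF a b c) (Ioo 0 1) :=
    fun x hx => (hderAt x hx).continuousAt.continuousWithinAt
  have hder : ∀ x ∈ interior (Ioo (0 : ℝ) 1), HasDerivWithinAt (gaussHF a b c)
      (a * b / c * gaussHF (a + 1) (b + 1) (c + 1) x) (interior (Ioo 0 1)) x := by
    rw [interior_Ioo]
    exact fun x hx => (hderAt x hx).hasDerivWithinAt
  have hF : ∀ x ∈ interior (Ioo (0 : ℝ) 1), 0 ≤ gaussHF (a + 1) (b + 1) (c + 1) x := by
    rw [interior_Ioo]
    exact fun x hx => gaussHF_nonneg (by linarith) (by linarith) (by linarith) hx.1.le hx.2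
  constructor
  · intro hab
    refine antitoneOn_of_hasDerivWithinAt_nonpos (convex_Ioo 0 1) hcont hder fun x hx => ?_
    exact mul_nonpos_of_nonpos_of_nonneg (div_nonpos_of_nonpos_of_nonneg hab hc.le) (hF x hx)
  · intro hab
    exact monotoneOn_of_hasDerivWithinAt_nonneg (convex_Ioo 0 1) hcont hder
      fun x hx => mul_nonneg (div_nonneg hab hc.le) (hF x hx)
end

section
/- Let (r_n) and (s_n) be real sequences with s_n > 0 for all n, and suppose the power series R(x) = Σ r_n x^n and S(x) = Σ s_n x^n converge for |x| < r with r > 0. If the sequence (r_n / s_n) is non-constant and increasing, then x ↦ R(x)/S(x) is strictly increasing on (0, r). -/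
/-- Absolute summability inside the radius of convergence. -/
lemma aux_abs_summable (r : ℝ) (f : ℕ → ℝ)
    (hc : ∀ x : ℝ, |x| < r → Summable (fun n => f n * x ^ n))
    (x : ℝ) (hx0 : 0 ≤ x) (hxr : x < r) :
    Summable (fun n => ‖f n * x ^ n‖) := by
  set t : ℝ := (x + r) / 2 with ht
  have htx : x < t := by simp [ht]; linarith
  have htr : t < r := by simp [ht]; linarith
  have ht0 : 0 < t := lt_of_le_of_lt hx0 htx
  have hsum := hc t (by rw [abs_of_pos ht0]; exact htr)
  have hb : BddAbove (Set.range fun n => ‖f n * t ^ n‖) := by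
    have h0 := hsum.tendsto_atTop_zero
    exact (h0.norm).bddAbove_range
  obtain ⟨C, hC⟩ := hb
  have hC' : ∀ n, ‖f n * t ^ n‖ ≤ C := fun n => hC (Set.mem_range_self n)
  have hq0 : 0 ≤ x / t := div_nonneg hx0 ht0.le
  have hq1 : x / t < 1 := (div_lt_one ht0).2 htx
  have hgeom : Summable (fun n : ℕ => C * (x / t) ^ n) :=
    (summable_geometric_of_lt_one hq0 hq1).mul_left C
  refine Summable.of_nonneg_of_le (fun n => norm_nonneg _) (fun n => ?_) hgeom
  have hxeq : x ^ n = t ^ n * (x / t) ^ n := by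
    rw [← mul_pow, mul_div_cancel₀ _ ht0.ne']
  calc ‖f n * x ^ n‖ = ‖f n * t ^ n‖ * (x / t) ^ n := by
        rw [hxeq, ← mul_assoc, norm_mul, norm_pow,
          Real.norm_eq_abs (x / t), abs_of_nonneg hq0]
    _ ≤ C * (x / t) ^ n := by
        exact mul_le_mul_of_nonneg_right (hC' n) (pow_nonneg hq0 n)

set_option maxHeartbeats 1000000 in
theorem stmt_3 (r : ℝ) (hr : 0 < r) (rs ss : ℕ → ℝ) (hs : ∀ n, 0 < ss n)
    (hconvR : ∀ x : ℝ, |x| < r → Summable (fun n => rs n * x ^ n))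
    (hconvS : ∀ x : ℝ, |x| < r → Summable (fun n => ss n * x ^ n))
    (hmono : ∀ n, rs n / ss n ≤ rs (n + 1) / ss (n + 1))
    (hnc : ∃ n, rs n / ss n < rs (n + 1) / ss (n + 1)) :
    StrictMonoOn (fun x => (∑' n, rs n * x ^ n) / (∑' n, ss n * x ^ n))
      (Set.Ioo 0 r) := by
  intro x hx y hy hxy
  obtain ⟨hx0, hxr⟩ := hx
  obtain ⟨hy0, hyr⟩ := hy
  have hxa : |x| < r := by rw [abs_of_pos hx0]; exact hxr
  have hya : |y| < r := by rw [abs_of_pos hy0]; exact hyr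
  -- absolute summability
  have hRx : Summable (fun n => ‖rs n * x ^ n‖) :=
    aux_abs_summable r rs hconvR x hx0.le hxr
  have hRy : Summable (fun n => ‖rs n * y ^ n‖) :=
    aux_abs_summable r rs hconvR y hy0.le hyr
  have hSx : Summable (fun n => ‖ss n * x ^ n‖) :=
    aux_abs_summable r ss hconvS x hx0.le hxr
  have hSy : Summable (fun n => ‖ss n * y ^ n‖) :=
    aux_abs_summable r ss hconvS y hy0.le hyr
  -- positivity of denominators
  have hSxpos : 0 < ∑' n, ss n * x ^ n :=
    Summable.tsum_pos (hconvS x hxa) (fun n => (mul_pos (hs n) (pow_pos hx0 n)).le) 0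
      (mul_pos (hs 0) (pow_pos hx0 0))
  have hSypos : 0 < ∑' n, ss n * y ^ n :=
    Summable.tsum_pos (hconvS y hya) (fun n => (mul_pos (hs n) (pow_pos hy0 n)).le) 0
      (mul_pos (hs 0) (pow_pos hy0 0))
  -- the double-sum kernel
  set g : ℕ × ℕ → ℝ :=
    fun p => rs p.1 * ss p.2 * (y ^ p.1 * x ^ p.2 - x ^ p.1 * y ^ p.2) with hgdef
  have hf1 : Summable (fun p : ℕ × ℕ => (rs p.1 * y ^ p.1) * (ss p.2 * x ^ p.2)) :=
    summable_mul_of_summable_norm hRy hSx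
  have hf2 : Summable (fun p : ℕ × ℕ => (rs p.1 * x ^ p.1) * (ss p.2 * y ^ p.2)) :=
    summable_mul_of_summable_norm hRx hSy
  have hg : Summable g := by
    refine (hf1.sub hf2).congr fun p => ?_
    simp only [hgdef]; ring
  have hD : ∑' p, g p =
      (∑' n, rs n * y ^ n) * (∑' n, ss n * x ^ n) -
      (∑' n, rs n * x ^ n) * (∑' n, ss n * y ^ n) := by
    have h1 := tsum_mul_tsum_of_summable_norm hRy hSx
    have h2 := tsum_mul_tsum_of_summable_norm hRx hSy
    calc ∑' p, g p
        = ∑' p : ℕ × ℕ, ((rs p.1 * y ^ p.1) * (ss p.2 * x ^ p.2) -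
            (rs p.1 * x ^ p.1) * (ss p.2 * y ^ p.2)) :=
          tsum_congr fun p => by simp only [hgdef]; ring
      _ = (∑' p : ℕ × ℕ, (rs p.1 * y ^ p.1) * (ss p.2 * x ^ p.2)) -
            ∑' p : ℕ × ℕ, (rs p.1 * x ^ p.1) * (ss p.2 * y ^ p.2) :=
          Summable.tsum_sub hf1 hf2
      _ = _ := by rw [← h1, ← h2]
  -- swap
  have hgsw : Summable (fun p : ℕ × ℕ => g (p.2, p.1)) := by
    have := ((Equiv.prodComm ℕ ℕ).summable_iff (f := g)).2 hg
    exact this.congr fun p => rfl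
  have hswap : ∑' p : ℕ × ℕ, g (p.2, p.1) = ∑' p, g p := by
    have := (Equiv.prodComm ℕ ℕ).tsum_eq g
    exact this
  set h : ℕ × ℕ → ℝ := fun p => g p + g (p.2, p.1) with hhdef
  have hh : Summable h := hg.add hgsw
  have hsumh : ∑' p, h p = 2 * ∑' p, g p := by
    rw [hhdef]
    rw [Summable.tsum_add hg hgsw, hswap]; ring
  -- cross-ratio inequalities
  have mono : Monotone (fun n => rs n / ss n) := monotone_nat_of_le_succ hmono
  have key : ∀ m n : ℕ, n ≤ m → rs n * ss m ≤ rs m * ss n := by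
    intro m n hnm
    exact (div_le_div_iff₀ (hs n) (hs m)).1 (mono hnm)
  have keyP : ∀ m n : ℕ, n ≤ m → x ^ m * y ^ n ≤ y ^ m * x ^ n := by
    intro m n hnm
    obtain ⟨k, rfl⟩ := Nat.exists_eq_add_of_le hnm
    rw [pow_add, pow_add]
    have hk : x ^ k ≤ y ^ k := pow_le_pow_left₀ hx0.le hxy.le k
    have h1 : x ^ n * x ^ k * y ^ n = (x ^ n * y ^ n) * x ^ k := by ring
    have h2 : y ^ n * y ^ k * x ^ n = (x ^ n * y ^ n) * y ^ k := by ring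
    rw [h1, h2]
    exact mul_le_mul_of_nonneg_left hk
      (mul_nonneg (pow_nonneg hx0.le n) (pow_nonneg hy0.le n))
  have hform : ∀ p : ℕ × ℕ,
      h p = (rs p.1 * ss p.2 - rs p.2 * ss p.1) *
        (y ^ p.1 * x ^ p.2 - x ^ p.1 * y ^ p.2) := by
    intro p; simp only [hhdef, hgdef]; ring
  have hnn : ∀ p : ℕ × ℕ, 0 ≤ h p := by
    intro ⟨m, n⟩
    rw [hform]
    rcases le_total n m with hle | hle
    · exact mul_nonneg (sub_nonneg.2 (key m n hle)) (sub_nonneg.2 (keyP m n hle))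
    · exact mul_nonneg_of_nonpos_of_nonpos (sub_nonpos.2 (key n m hle))
        (sub_nonpos.2 (by linarith [keyP n m hle]))
  obtain ⟨n0, hn0⟩ := hnc
  have hp0 : 0 < h (n0 + 1, n0) := by
    rw [hform]
    have h1 : rs n0 * ss (n0 + 1) < rs (n0 + 1) * ss n0 :=
      (div_lt_div_iff₀ (hs n0) (hs (n0 + 1))).1 hn0
    have h2 : x ^ (n0 + 1) * y ^ n0 < y ^ (n0 + 1) * x ^ n0 := by
      have e1 : x ^ (n0 + 1) * y ^ n0 = (x * y) ^ n0 * x := by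
        rw [mul_pow, pow_succ]; ring
      have e2 : y ^ (n0 + 1) * x ^ n0 = (x * y) ^ n0 * y := by
        rw [mul_pow, pow_succ]; ring
      rw [e1, e2]
      exact mul_lt_mul_of_pos_left hxy (pow_pos (mul_pos hx0 hy0) n0)
    exact mul_pos (sub_pos.2 h1) (sub_pos.2 h2)
  have hpos : 0 < ∑' p, h p := Summable.tsum_pos hh hnn (n0 + 1, n0) hp0
  have hDpos : 0 < ∑' p, g p := by linarith [hsumh ▸ hpos]
  have hfin : (∑' n, rs n * x ^ n) * (∑' n, ss n * y ^ n) <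
      (∑' n, rs n * y ^ n) * (∑' n, ss n * x ^ n) := by
    rw [hD] at hDpos; linarith
  simpa using (div_lt_div_iff₀ hSxpos hSypos).2 hfin
end

section
/- With the notation of the previous item (I_0 = h holomorphic with |h| ≤ M and |h'| ≤ M on 𝔻, and I_n = I_{n-1} - p·z^{-n}∫_0^z ζ^{n-1}I_{n-1}dζ), the derivatives satisfy sup_{z∈𝔻}|I_n'(z)| ≤ M·(1 + p·Σ_{i=1}^n (i+1)(p+1)^{i-1}) for n = 1, …, p-1. In particular each I_n is Lipschitz continuous on 𝔻. -/
/-!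
Differentiating under the integral sign gives
`I_n'(z) = I_{n-1}'(z) - p ∫₀¹ t^n I_{n-1}'(t z) dt`, so `sup |I_n'| ≤ (1 + p) sup |I_{n-1}'|`.
With `S_n = ∑_{i=1}^n (i+1)(p+1)^(i-1)`, the bound `1 + p S_m ≤ (m+2)(p+1)^m` gives
`(1 + p S_{n-1})(1 + p) ≤ 1 + p S_n`, which closes the induction. The Lipschitz bound is the
mean value inequality on the convex disc.
-/

open Metric Set

def weightedPowSum (x : ℝ) (n : ℕ) : ℝ :=
  ∑ i ∈ Finset.Icc 1 n, ((i : ℝ) + 1) * (x + 1) ^ (i - 1)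

lemma weightedPowSum_succ (x : ℝ) (n : ℕ) :
    weightedPowSum x (n + 1) = weightedPowSum x n + ((n : ℝ) + 2) * (x + 1) ^ n := by
  rw [weightedPowSum, weightedPowSum, Finset.sum_Icc_succ_top (by omega), Nat.add_sub_cancel]
  push_cast
  ring

lemma one_add_mul_weightedPowSum_le {x : ℝ} (hx : 0 ≤ x) (n : ℕ) :
    1 + x * weightedPowSum x n ≤ ((n : ℝ) + 2) * (x + 1) ^ n := by
  induction n with
  | zero => simp [weightedPowSum]
  | succ n ih =>
    have hpow : 0 ≤ (x + 1) ^ n * (x + 1) := by positivity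
    rw [weightedPowSum_succ, pow_succ]
    push_cast
    nlinarith [mul_le_mul_of_nonneg_right ih (by linarith : 0 ≤ x + 1)]

lemma one_add_mul_weightedPowSum_mul_le {x : ℝ} (hx : 0 ≤ x) (n : ℕ) :
    (1 + x * weightedPowSum x n) * (1 + x) ≤ 1 + x * weightedPowSum x (n + 1) := by
  rw [weightedPowSum_succ]
  nlinarith [mul_le_mul_of_nonneg_left (one_add_mul_weightedPowSum_le hx n) hx]

section RadialIntegral

variable {R : ℝ} {f : ℂ → ℂ} {z : ℂ}

lemma ofReal_mul_mem_ball {t : ℝ} (ht : t ∈ Icc 0 1) (hz : z ∈ ball (0 : ℂ) R) :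
    (t : ℂ) * z ∈ ball (0 : ℂ) R := by
  rw [mem_ball_zero_iff] at hz ⊢
  rw [norm_mul, Complex.norm_real, Real.norm_of_nonneg ht.1]
  exact (mul_le_of_le_one_left (norm_nonneg z) ht.2).trans_lt hz

lemma norm_ofReal_pow_mul_le {t : ℝ} (ht : t ∈ Icc 0 1) (n : ℕ) (a : ℂ) :
    ‖(t : ℂ) ^ n * a‖ ≤ ‖a‖ := by
  rw [norm_mul, norm_pow, Complex.norm_real, Real.norm_of_nonneg ht.1]
  exact mul_le_of_le_one_left (norm_nonneg a) (pow_le_one₀ ht.1 ht.2)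

lemma norm_integral_pow_mul_comp_ofReal_mul_le (n : ℕ) {C : ℝ}
    (hf : ∀ w ∈ ball (0 : ℂ) R, ‖f w‖ ≤ C) (hz : z ∈ ball (0 : ℂ) R) :
    ‖∫ t in (0 : ℝ)..1, (t : ℂ) ^ n * f (t * z)‖ ≤ C := by
  have := intervalIntegral.norm_integral_le_of_norm_le_const (a := 0) (b := 1)
    (f := fun t : ℝ => (t : ℂ) ^ n * f (t * z)) (C := C) fun t ht => by
      rw [uIoc_of_le zero_le_one] at ht
      have ht' : t ∈ Icc (0 : ℝ) 1 := Ioc_subset_Icc_self ht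
      exact (norm_ofReal_pow_mul_le ht' n _).trans (hf _ (ofReal_mul_mem_ball ht' hz))
  simpa using this

lemma continuousOn_pow_mul_comp_ofReal_mul (n : ℕ) (hf : ContinuousOn f (ball 0 R))
    (hz : z ∈ ball (0 : ℂ) R) :
    ContinuousOn (fun t : ℝ => (t : ℂ) ^ n * f (t * z)) (Icc 0 1) :=
  (Complex.continuous_ofReal.pow n).continuousOn.mul <|
    hf.comp (Complex.continuous_ofReal.mul continuous_const).continuousOn
      fun _ ht => ofReal_mul_mem_ball ht hz

lemma hasDerivAt_integral_pow_mul_comp_ofReal_mul (n : ℕ) (hf : DifferentiableOn ℂ f (ball 0 R))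
    (hz : z ∈ ball (0 : ℂ) R) :
    HasDerivAt (fun w => ∫ t in (0 : ℝ)..1, (t : ℂ) ^ n * f (t * w))
      (∫ t in (0 : ℝ)..1, (t : ℂ) ^ (n + 1) * deriv f (t * z)) z := by
  have hzR : ‖z‖ < R := mem_ball_zero_iff.mp hz
  set r := (‖z‖ + R) / 2 with hr
  have hnbhd : ball z (r - ‖z‖) ⊆ ball (0 : ℂ) r :=
    ball_subset_ball' (by rw [dist_zero_right, sub_add_cancel])
  have hrR : closedBall (0 : ℂ) r ⊆ ball 0 R := closedBall_subset_ball (by linarith)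
  -- `deriv f` is bounded on the compact disc `closedBall 0 r`, which dominates the integrand
  obtain ⟨C, hC⟩ := (isCompact_closedBall (0 : ℂ) r).exists_bound_of_continuousOn
    ((hf.deriv isOpen_ball).continuousOn.mono hrR)
  have hIcc : ∀ {t : ℝ}, t ∈ uIoc 0 1 → t ∈ Icc 0 1 := fun ht =>
    Ioc_subset_Icc_self (by rwa [uIoc_of_le zero_le_one] at ht)
  have hsmall : ∀ {t : ℝ}, t ∈ uIoc 0 1 → ∀ w ∈ ball z (r - ‖z‖), (t : ℂ) * w ∈ closedBall (0 : ℂ) r :=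
    fun ht w hw => ball_subset_closedBall (ofReal_mul_mem_ball (hIcc ht) (hnbhd hw))
  refine (intervalIntegral.hasDerivAt_integral_of_dominated_loc_of_deriv_le
    (F' := fun w t => (t : ℂ) ^ (n + 1) * deriv f (t * w)) (bound := fun _ => C)
    (ball_mem_nhds z (show 0 < r - ‖z‖ by linarith)) ?_ ?_ ?_ ?_ intervalIntegrable_const ?_).2
  · filter_upwards [isOpen_ball.mem_nhds hz] with w hw
    exact ((continuousOn_pow_mul_comp_ofReal_mul n hf.continuousOn hw).mono
      (fun t => hIcc)).aestronglyMeasurable measurableSet_uIoc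
  · exact (continuousOn_pow_mul_comp_ofReal_mul n hf.continuousOn hz).intervalIntegrable_of_Icc
      zero_le_one
  · exact ((continuousOn_pow_mul_comp_ofReal_mul (n + 1) (hf.deriv isOpen_ball).continuousOn
      hz).mono (fun t => hIcc)).aestronglyMeasurable measurableSet_uIoc
  · refine Filter.Eventually.of_forall fun t ht w hw => ?_
    exact (norm_ofReal_pow_mul_le (hIcc ht) _ _).trans (hC _ (hsmall ht w hw))
  · refine Filter.Eventually.of_forall fun t ht w hw => ?_
    have hd := (hf.differentiableAt (isOpen_ball.mem_nhds (hrR (hsmall ht w hw)))).hasDerivAt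
    have hlin : HasDerivAt (fun x : ℂ => (t : ℂ) * x) t w := by
      simpa using (hasDerivAt_id w).const_mul (t : ℂ)
    exact ((hd.comp w hlin).const_mul _).congr_deriv (by ring)

lemma differentiableOn_and_norm_deriv_le_of_eqOn_sub_mul_integral (n : ℕ) (c : ℂ) {g : ℂ → ℂ}
    {C : ℝ} (hf : DifferentiableOn ℂ f (ball 0 R)) (hf' : ∀ z ∈ ball (0 : ℂ) R, ‖deriv f z‖ ≤ C)
    (hg : EqOn g (fun z => f z - c * ∫ t in (0 : ℝ)..1, (t : ℂ) ^ n * f (t * z)) (ball 0 R)) :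
    DifferentiableOn ℂ g (ball 0 R) ∧ ∀ z ∈ ball (0 : ℂ) R, ‖deriv g z‖ ≤ C * (1 + ‖c‖) := by
  have hderiv : ∀ z ∈ ball (0 : ℂ) R, HasDerivAt g
      (deriv f z - c * ∫ t in (0 : ℝ)..1, (t : ℂ) ^ (n + 1) * deriv f (t * z)) z := fun z hz =>
    ((hf.differentiableAt (isOpen_ball.mem_nhds hz)).hasDerivAt.sub
      ((hasDerivAt_integral_pow_mul_comp_ofReal_mul n hf hz).const_mul c)).congr_of_eventuallyEq
      (Filter.eventuallyEq_of_mem (isOpen_ball.mem_nhds hz) hg)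
  refine ⟨fun z hz => (hderiv z hz).differentiableAt.differentiableWithinAt, fun z hz => ?_⟩
  rw [(hderiv z hz).deriv]
  calc _ ≤ ‖deriv f z‖ + ‖c‖ * ‖∫ t in (0 : ℝ)..1, (t : ℂ) ^ (n + 1) * deriv f (t * z)‖ :=
        (norm_sub_le _ _).trans_eq (by rw [norm_mul])
    _ ≤ C + ‖c‖ * C := add_le_add (hf' z hz) <| mul_le_mul_of_nonneg_left
        (norm_integral_pow_mul_comp_ofReal_mul_le (n + 1) hf' hz) (norm_nonneg c)
    _ = C * (1 + ‖c‖) := by ring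

end RadialIntegral

open Metric in
theorem stmt_8_general (p : ℕ) (M : ℝ) (h : ℂ → ℂ)
    (hhol : DifferentiableOn ℂ h (ball (0 : ℂ) 1))
    (hM' : ∀ z ∈ ball (0 : ℂ) 1, ‖deriv h z‖ ≤ M)
    (I : ℕ → ℂ → ℂ) (hI0 : I 0 = h)
    (hrec : ∀ n : ℕ, 1 ≤ n → n ≤ p - 1 → ∀ z ∈ ball (0 : ℂ) 1,
      I n z = I (n - 1) z -
        (p : ℂ) * ∫ t in (0 : ℝ)..1, (t : ℂ) ^ (n - 1) * I (n - 1) ((t : ℂ) * z)) :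
    ∀ n : ℕ, 1 ≤ n → n ≤ p - 1 →
      (∀ z ∈ ball (0 : ℂ) 1, ‖deriv (I n) z‖ ≤
        M * (1 + (p : ℝ) * ∑ i ∈ Finset.Icc 1 n, ((i : ℝ) + 1) * ((p : ℝ) + 1) ^ (i - 1))) ∧
      LipschitzOnWith
        (Real.toNNReal (M * (1 + (p : ℝ) *
          ∑ i ∈ Finset.Icc 1 n, ((i : ℝ) + 1) * ((p : ℝ) + 1) ^ (i - 1))))
        (I n) (ball (0 : ℂ) 1) := by
  have hM0 : 0 ≤ M := (norm_nonneg _).trans (hM' 0 (mem_ball_self one_pos))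
  have key : ∀ n ≤ p - 1, DifferentiableOn ℂ (I n) (ball 0 1) ∧
      ∀ z ∈ ball (0 : ℂ) 1, ‖deriv (I n) z‖ ≤ M * (1 + p * weightedPowSum p n) := by
    intro n
    induction n with
    | zero =>
      intro _
      subst hI0
      exact ⟨hhol, fun z hz => by simpa [weightedPowSum] using hM' z hz⟩
    | succ n ih =>
      intro hn
      obtain ⟨hdiff, hbound⟩ := ih (by omega)
      obtain ⟨hdiff', hbound'⟩ := differentiableOn_and_norm_deriv_le_of_eqOn_sub_mul_integral n p
        hdiff hbound (hrec (n + 1) (by omega) hn)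
      refine ⟨hdiff', fun z hz => (hbound' z hz).trans ?_⟩
      rw [Complex.norm_natCast, mul_assoc]
      exact mul_le_mul_of_nonneg_left (one_add_mul_weightedPowSum_mul_le p.cast_nonneg n) hM0
  intro n _ hn
  obtain ⟨hdiff, hbound⟩ := key n hn
  refine ⟨hbound, (convex_ball 0 1).lipschitzOnWith_of_nnnorm_deriv_le
    (fun z hz => hdiff.differentiableAt (isOpen_ball.mem_nhds hz)) fun z hz => ?_⟩
  rw [← norm_toNNReal]
  exact Real.toNNReal_le_toNNReal (hbound z hz)

open Metric in
theorem stmt_8 (p : ℕ) (hp : 1 ≤ p) (M : ℝ) (h : ℂ → ℂ)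
    (hhol : DifferentiableOn ℂ h (ball (0 : ℂ) 1))
    (hM : ∀ z ∈ ball (0 : ℂ) 1, ‖h z‖ ≤ M)
    (hM' : ∀ z ∈ ball (0 : ℂ) 1, ‖deriv h z‖ ≤ M)
    (I : ℕ → ℂ → ℂ) (hI0 : I 0 = h)
    (hrec : ∀ n : ℕ, 1 ≤ n → n ≤ p - 1 → ∀ z ∈ ball (0 : ℂ) 1,
      I n z = I (n - 1) z -
        (p : ℂ) * ∫ t in (0 : ℝ)..1, (t : ℂ) ^ (n - 1) * I (n - 1) ((t : ℂ) * z)) :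
    ∀ n : ℕ, 1 ≤ n → n ≤ p - 1 →
      (∀ z ∈ ball (0 : ℂ) 1, ‖deriv (I n) z‖ ≤
        M * (1 + (p : ℝ) * ∑ i ∈ Finset.Icc 1 n, ((i : ℝ) + 1) * ((p : ℝ) + 1) ^ (i - 1))) ∧
      LipschitzOnWith
        (Real.toNNReal (M * (1 + (p : ℝ) *
          ∑ i ∈ Finset.Icc 1 n, ((i : ℝ) + 1) * ((p : ℝ) + 1) ^ (i - 1))))
        (I n) (ball (0 : ℂ) 1) :=
  stmt_8_general p M h hhol hM' I hI0 hrec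
end

section
/- Let α > -1, k ≥ 1 an integer, and c a real number. Define f(e^{iθ}) = F₁(1)e^{iθ} + c·F_k(1)e^{-ikθ}, where F_k(1) = Γ(k+1)Γ(1+α)/(Γ(k+1+α/2)Γ(1+α/2)). If |c| < Γ(k+1+α/2)/(k²·Γ(k+1)·Γ(2+α/2)), then at every θ where the tangent vector (d/dθ)f(e^{iθ}) has nonzero real part, the derivative in θ of the tangent direction tan(ψ(θ)) (ψ = argument of (d/dθ)f(e^{iθ})) is strictly positive; in particular (F₁(1))² - k³c²(F_k(1))² - k(k-1)|c|F₁(1)F_k(1) > 0. -/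
/-!
With `A = F₁(1)` and `B = c F_k(1)`, the tangent vector of `θ ↦ A e^{iθ} + B e^{-ikθ}` is
`(-A sin θ - kB sin kθ) + i (A cos θ - kB cos kθ)`, and the quotient rule gives
`d/dθ tan ψ = (A² - k³B² + k(k-1)AB cos((k+1)θ)) / (Re f')²`. Since `k(k-1) ≥ 0`, the numerator is
at least `A² - k³B² - k(k-1)A|B| = (A + k|B|)(A - k²|B|)`, which is positive as soon as
`k²|B| < A`; using `Γ(2) = 1`, this is exactly the hypothesis on `|c|`.
-/

open Real Complex

lemma hasDerivAt_cexp_mul_mul_I (m : ℂ) (x : ℝ) :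
    HasDerivAt (fun θ : ℝ => cexp (m * θ * I)) (m * I * cexp (m * x * I)) x := by
  simpa [mul_comm] using (((hasDerivAt_id (x : ℂ)).const_mul m).mul_const I).cexp.comp_ofReal

lemma deriv_mul_cexp_add_mul_cexp_neg (A B k θ : ℝ) :
    deriv (fun φ : ℝ => (A : ℂ) * cexp (φ * I) + (B : ℂ) * cexp (-(k : ℂ) * φ * I)) θ =
      ⟨-A * Real.sin θ - k * B * Real.sin (k * θ), A * Real.cos θ - k * B * Real.cos (k * θ)⟩ := by
  have h1 := (hasDerivAt_cexp_mul_mul_I 1 θ).const_mul (A : ℂ)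
  have h2 := (hasDerivAt_cexp_mul_mul_I (-(k : ℂ)) θ).const_mul (B : ℂ)
  simp only [one_mul] at h1
  have hk : -(k : ℂ) * θ * I = ((-(k * θ) : ℝ) : ℂ) * I := by push_cast; ring
  refine (h1.add h2).deriv.trans ?_
  rw [hk]
  apply Complex.ext <;>
  simp only [add_re, add_im, mul_re, mul_im, I_re, I_im, ofReal_re, ofReal_im, neg_re, neg_im,
    exp_ofReal_mul_I_re, exp_ofReal_mul_I_im, Real.cos_neg, Real.sin_neg] <;> ring

lemma hasDerivAt_tangent_slope (A B k θ : ℝ)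
    (hθ : -A * Real.sin θ - k * B * Real.sin (k * θ) ≠ 0) :
    HasDerivAt
      (fun φ => (A * Real.cos φ - k * B * Real.cos (k * φ)) /
        (-A * Real.sin φ - k * B * Real.sin (k * φ)))
      ((A ^ 2 - k ^ 3 * B ^ 2 + k * (k - 1) * A * B * Real.cos ((k + 1) * θ)) /
        (-A * Real.sin θ - k * B * Real.sin (k * θ)) ^ 2) θ := by
  have hsink := (Real.hasDerivAt_sin (k * θ)).comp θ ((hasDerivAt_id θ).const_mul k)
  have hcosk := (Real.hasDerivAt_cos (k * θ)).comp θ ((hasDerivAt_id θ).const_mul k)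
  have hM := ((Real.hasDerivAt_cos θ).const_mul A).sub (hcosk.const_mul (k * B))
  have hR := ((Real.hasDerivAt_sin θ).const_mul (-A)).sub (hsink.const_mul (k * B))
  refine (hM.fun_div hR hθ).congr_deriv ?_
  congr 1
  simp only [Pi.sub_apply, Function.comp_apply, add_mul, one_mul, Real.cos_add]
  linear_combination (A ^ 2 : ℝ) * Real.sin_sq_add_cos_sq θ -
    k ^ 3 * B ^ 2 * Real.sin_sq_add_cos_sq (k * θ)

/-- The coefficient `F_k(1)` of the paper. -/
noncomputable def coeffF (α k : ℝ) : ℝ :=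
  Real.Gamma (k + 1) * Real.Gamma (1 + α) / (Real.Gamma (k + 1 + α / 2) * Real.Gamma (1 + α / 2))

lemma coeffF_pos {α k : ℝ} (hα : -1 < α) (hk : 0 ≤ k) : 0 < coeffF α k := by
  unfold coeffF
  have := Real.Gamma_pos_of_pos (show 0 < k + 1 by linarith)
  have := Real.Gamma_pos_of_pos (show 0 < 1 + α by linarith)
  have := Real.Gamma_pos_of_pos (show 0 < k + 1 + α / 2 by linarith)
  have := Real.Gamma_pos_of_pos (show 0 < 1 + α / 2 by linarith)
  positivity

lemma sq_mul_abs_mul_coeffF_lt {α k c : ℝ} (hα : -1 < α) (hk : 0 < k)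
    (hc : |c| < Real.Gamma (k + 1 + α / 2) /
      (k ^ 2 * Real.Gamma (k + 1) * Real.Gamma (2 + α / 2))) :
    k ^ 2 * |c| * coeffF α k < coeffF α 1 := by
  have hGk := Real.Gamma_pos_of_pos (show 0 < k + 1 by linarith)
  have hG1 := Real.Gamma_pos_of_pos (show 0 < 1 + α by linarith)
  have hGka := Real.Gamma_pos_of_pos (show 0 < k + 1 + α / 2 by linarith)
  have hGh := Real.Gamma_pos_of_pos (show 0 < 1 + α / 2 by linarith)
  have hG2 := Real.Gamma_pos_of_pos (show 0 < 2 + α / 2 by linarith)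
  rw [lt_div_iff₀ (by positivity)] at hc
  have h1 : coeffF α 1 =
      Real.Gamma (1 + α) / (Real.Gamma (2 + α / 2) * Real.Gamma (1 + α / 2)) := by
    rw [coeffF, one_add_one_eq_two, Real.Gamma_two, one_mul]
  rw [h1, coeffF, ← mul_div_assoc, div_lt_div_iff₀ (by positivity) (by positivity)]
  calc k ^ 2 * |c| * (Real.Gamma (k + 1) * Real.Gamma (1 + α)) *
        (Real.Gamma (2 + α / 2) * Real.Gamma (1 + α / 2))
      = |c| * (k ^ 2 * Real.Gamma (k + 1) * Real.Gamma (2 + α / 2)) *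
          (Real.Gamma (1 + α) * Real.Gamma (1 + α / 2)) := by ring
    _ < Real.Gamma (k + 1 + α / 2) * (Real.Gamma (1 + α) * Real.Gamma (1 + α / 2)) := by gcongr
    _ = _ := by ring

lemma sq_sub_cube_mul_sq_sub_pos {A B k : ℝ} (hk : 1 ≤ k) (hB : k ^ 2 * |B| < A) :
    0 < A ^ 2 - k ^ 3 * B ^ 2 - k * (k - 1) * A * |B| := by
  have hfactor : A ^ 2 - k ^ 3 * B ^ 2 - k * (k - 1) * A * |B| =
      (A + k * |B|) * (A - k ^ 2 * |B|) := by
    rw [← sq_abs B]; ring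
  rw [hfactor]
  have : 0 ≤ k ^ 2 * |B| := by positivity
  exact mul_pos (by nlinarith [abs_nonneg B]) (by linarith)

lemma tangent_slope_numerator_pos {A B k : ℝ} (hk : 1 ≤ k) (hB : k ^ 2 * |B| < A) (t : ℝ) :
    0 < A ^ 2 - k ^ 3 * B ^ 2 + k * (k - 1) * A * B * Real.cos t := by
  have hA : 0 ≤ k * (k - 1) * A := by
    have : 0 ≤ k ^ 2 * |B| := by positivity
    have : 0 ≤ k - 1 := by linarith
    have : 0 ≤ A := by linarith
    positivity
  have hcos : -|B| ≤ B * Real.cos t := by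
    have : |B * Real.cos t| ≤ |B| := by
      rw [abs_mul]; exact mul_le_of_le_one_right (abs_nonneg B) (Real.abs_cos_le_one t)
    exact (abs_le.mp this).1
  linarith [sq_sub_cube_mul_sq_sub_pos hk hB, mul_le_mul_of_nonneg_left hcos hA]

theorem stmt_12 (α : ℝ) (hα : -1 < α) (k : ℕ) (hk : 1 ≤ k) (c : ℝ)
    (F1 Fk : ℝ)
    (hF1 : F1 = Real.Gamma 2 * Real.Gamma (1 + α) /
      (Real.Gamma (2 + α / 2) * Real.Gamma (1 + α / 2)))
    (hFk : Fk = Real.Gamma ((k : ℝ) + 1) * Real.Gamma (1 + α) /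
      (Real.Gamma ((k : ℝ) + 1 + α / 2) * Real.Gamma (1 + α / 2)))
    (hc : |c| < Real.Gamma ((k : ℝ) + 1 + α / 2) /
      ((k : ℝ) ^ 2 * Real.Gamma ((k : ℝ) + 1) * Real.Gamma (2 + α / 2)))
    (f : ℝ → ℂ)
    (hf : ∀ θ : ℝ, f θ = (F1 : ℂ) * Complex.exp (θ * Complex.I) +
      (c : ℂ) * (Fk : ℂ) * Complex.exp (-(k : ℂ) * θ * Complex.I)) :
    (∀ θ : ℝ, (deriv f θ).re ≠ 0 →
      0 < deriv (fun φ => (deriv f φ).im / (deriv f φ).re) θ) ∧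
    F1 ^ 2 - (k : ℝ) ^ 3 * c ^ 2 * Fk ^ 2 - (k : ℝ) * ((k : ℝ) - 1) * |c| * F1 * Fk > 0 := by
  have hk1 : (1 : ℝ) ≤ k := by exact_mod_cast hk
  have hF1' : F1 = coeffF α 1 := by rw [hF1, coeffF, one_add_one_eq_two]
  have hFk_pos : 0 < Fk := hFk ▸ coeffF_pos hα (by positivity)
  have habs : |c * Fk| = |c| * Fk := by rw [abs_mul, abs_of_pos hFk_pos]
  have hsmall : (k : ℝ) ^ 2 * |c * Fk| < F1 := by
    rw [habs, ← mul_assoc, hF1', hFk]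
    exact sq_mul_abs_mul_coeffF_lt hα (by positivity) hc
  refine ⟨fun θ hθ => ?_, ?_⟩
  · have hf' : f = fun φ : ℝ => (F1 : ℂ) * cexp (φ * I) +
        ((c * Fk : ℝ) : ℂ) * cexp (-((k : ℝ) : ℂ) * φ * I) := by
      funext φ; rw [hf]; push_cast; ring
    simp only [hf', deriv_mul_cexp_add_mul_cexp_neg] at hθ ⊢
    rw [(hasDerivAt_tangent_slope _ _ _ θ hθ).deriv]
    exact div_pos (tangent_slope_numerator_pos hk1 hsmall _) (by positivity)
  · have := sq_sub_cube_mul_sq_sub_pos hk1 hsmall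
    rw [habs] at this
    linarith
end

section
/- Let α ∈ (0,2) and k ≥ 1 an integer. Then Γ(1+α)Γ(k+1)/(Γ(1+α/2)Γ(k+1+α/2)) < 1. Conversely, if α ∈ (-1,0), then Γ(1+α)Γ(k+1)/(Γ(1+α/2)Γ(k+1+α/2)) > 1. -/
/-!
`log ∘ Γ` is strictly convex on `(0, ∞)`: it is convex (Bohr–Mollerup), and the identity
`log Γ x = log Γ (x + 1) - log x` adds the strictly convex `-log`. Hence its increments
`log Γ (x + h) - log Γ x` over a fixed length `h > 0` strictly increase with `x`, i.e.
`Γ (x + h) Γ y < Γ x Γ (y + h)` for `0 < x < y`. For `α ∈ (0, 2)` take `x = 1 + α/2`, `y = k + 1`,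
`h = α/2`; for `α ∈ (-1, 0)` take `x = 1 + α`, `y = k + 1 + α/2`, `h = -α/2`. In both cases
`x < y` amounts to `α/2 < k`.
-/

open Real Set

theorem StrictConvexOn.add_sub_lt_add_sub {s : Set ℝ} {f : ℝ → ℝ} (hf : StrictConvexOn ℝ s f)
    {x y h : ℝ} (hx : x ∈ s) (hyh : y + h ∈ s) (hxy : x < y) (hh : 0 < h) :
    f (x + h) - f x < f (y + h) - f y := by
  have hy : y ∈ s := hf.1.ordConnected.out hx hyh ⟨hxy.le, by linarith⟩
  have left := hf.secant_strict_mono_aux2 hx hyh (lt_add_of_pos_right x hh) (by linarith)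
  have right := hf.secant_strict_mono_aux3 hx hyh hxy (lt_add_of_pos_right y hh)
  rw [add_sub_cancel_left] at left right
  exact (div_lt_div_iff_of_pos_right hh).mp (left.trans right)

namespace Real

theorem strictConvexOn_log_Gamma : StrictConvexOn ℝ (Ioi 0) (log ∘ Gamma) := by
  have hshift : ConvexOn ℝ (Ioi 0) fun x => log (Gamma (x + 1)) :=
    (convexOn_log_Gamma.translate_left 1).subset (fun x (hx : 0 < x) => by
      simp only [mem_preimage, mem_Ioi]; linarith) (convex_Ioi 0)
  refine (hshift.sub_strictConcaveOn strictConcaveOn_log_Ioi).congr fun x (hx : 0 < x) => ?_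
  simp only [Pi.sub_apply, Function.comp_apply, Gamma_add_one hx.ne']
  rw [log_mul hx.ne' (Gamma_pos_of_pos hx).ne']
  ring

theorem Gamma_add_mul_Gamma_lt {x y h : ℝ} (hx : 0 < x) (hxy : x < y) (hh : 0 < h) :
    Gamma (x + h) * Gamma y < Gamma x * Gamma (y + h) := by
  have hy : 0 < y := hx.trans hxy
  have key := strictConvexOn_log_Gamma.add_sub_lt_add_sub hx (show 0 < y + h by linarith) hxy hh
  simp only [Function.comp_apply] at key
  rw [← log_lt_log_iff (by positivity) (by positivity), log_mul, log_mul]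
  all_goals first | linarith | exact (Gamma_pos_of_pos (by linarith)).ne'

end Real

theorem stmt_15 (α : ℝ) (k : ℕ) (hk : 1 ≤ k) :
    (α ∈ Set.Ioo (0 : ℝ) 2 →
      Real.Gamma (1 + α) * Real.Gamma ((k : ℝ) + 1) /
        (Real.Gamma (1 + α / 2) * Real.Gamma ((k : ℝ) + 1 + α / 2)) < 1) ∧
    (α ∈ Set.Ioo (-1 : ℝ) 0 →
      Real.Gamma (1 + α) * Real.Gamma ((k : ℝ) + 1) /
        (Real.Gamma (1 + α / 2) * Real.Gamma ((k : ℝ) + 1 + α / 2)) > 1) := by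
  have hk1 : (1 : ℝ) ≤ k := by exact_mod_cast hk
  have hden : ∀ α : ℝ, -1 < α → α < 2 →
      0 < Gamma (1 + α / 2) * Gamma ((k : ℝ) + 1 + α / 2) := fun α h₁ h₂ =>
    mul_pos (Gamma_pos_of_pos (by linarith)) (Gamma_pos_of_pos (by linarith))
  constructor
  · rintro ⟨h₀, h₂⟩
    rw [div_lt_one (hden α (by linarith) h₂)]
    have := Gamma_add_mul_Gamma_lt (x := 1 + α / 2) (y := k + 1) (h := α / 2)
      (by linarith) (by linarith) (by linarith)
    rwa [add_assoc 1, add_halves] at this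
  · rintro ⟨h₁, h₀⟩
    rw [gt_iff_lt, one_lt_div (hden α h₁ (by linarith))]
    have := Gamma_add_mul_Gamma_lt (x := 1 + α) (y := k + 1 + α / 2) (h := -α / 2)
      (by linarith) (by linarith) (by linarith)
    rwa [show 1 + α + -α / 2 = 1 + α / 2 by ring,
      show (k : ℝ) + 1 + α / 2 + -α / 2 = k + 1 by ring] at this
end

section
/- The function h(α) = ψ(1+α) - ψ(1+α/2) - 1/(2+α) is strictly increasing on (-1,1), where ψ is the digamma function. -/
/-- The digamma function `ψ = Γ'/Γ`. -/
noncomputable def digamma (x : ℝ) : ℝ := deriv Real.Gamma x / Real.Gamma x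

/-!
Put `g α = ψ (1 + α) - ψ (1 + α / 2)`. Since `ψ` is the derivative of the convex function
`log ∘ Γ` it is monotone, so together with `ψ (x + 1) = ψ x + 1 / x` it gives
`ψ (y + n) - ψ (x + n) → 0`, and hence `ψ y - ψ x = ∑ₖ (1 / (x + k) - 1 / (y + k))`.
For `-1 < a ≤ b < 1` the `k`-th term of the series for `g b - g a` is
`(b - a) (2 (1 + k)² - a b) / (4 (1 + a + k) (1 + b + k) (1 + a/2 + k) (1 + b/2 + k)) ≥ 0`,
so `g` is monotone, and adding the strictly increasing `-1 / (2 + α)` makes it strict.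
-/

open Real Set Filter Topology

lemma ne_neg_natCast_of_pos {x : ℝ} (hx : 0 < x) (m : ℕ) : x ≠ -m := by
  linarith [(Nat.cast_nonneg m : (0 : ℝ) ≤ m)]

lemma differentiableAt_log_Gamma {x : ℝ} (hx : 0 < x) :
    DifferentiableAt ℝ (fun y => log (Gamma y)) x :=
  (differentiableAt_Gamma (ne_neg_natCast_of_pos hx)).log (Gamma_pos_of_pos hx).ne'

lemma digamma_eq_deriv_log_Gamma {x : ℝ} (hx : 0 < x) :
    digamma x = deriv (fun y => log (Gamma y)) x := by
  rw [digamma, deriv.log (differentiableAt_Gamma (ne_neg_natCast_of_pos hx))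
    (Gamma_pos_of_pos hx).ne']

lemma digamma_add_one {x : ℝ} (hx : 0 < x) : digamma (x + 1) = digamma x + 1 / x := by
  rw [digamma_eq_deriv_log_Gamma (by linarith), digamma_eq_deriv_log_Gamma hx,
    ← deriv_comp_add_const, one_div, ← deriv_log,
    ← deriv_fun_add (differentiableAt_log_Gamma hx) (differentiableAt_log hx.ne')]
  refine EventuallyEq.deriv_eq ?_
  filter_upwards [eventually_gt_nhds hx] with y hy
  rw [Gamma_add_one hy.ne', log_mul hy.ne' (Gamma_pos_of_pos hy).ne', add_comm]

lemma digamma_add_nat {x : ℝ} (hx : 0 < x) (n : ℕ) :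
    digamma (x + n) = digamma x + ∑ k ∈ Finset.range n, 1 / (x + k) := by
  induction n with
  | zero => simp
  | succ n ih =>
    rw [Nat.cast_succ, ← add_assoc, digamma_add_one (by positivity), ih, Finset.sum_range_succ,
      add_assoc]

lemma monotoneOn_digamma : MonotoneOn digamma (Ioi 0) := by
  have hconv : ConvexOn ℝ (Ioi 0) (fun y => log (Gamma y)) := convexOn_log_Gamma
  refine (hconv.monotoneOn_deriv fun x hx => differentiableAt_log_Gamma hx).congr ?_
  intro x hx
  exact (digamma_eq_deriv_log_Gamma hx).symm

lemma tendsto_one_div_add_nat (c : ℝ) :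
    Tendsto (fun n : ℕ => 1 / (c + n)) atTop (𝓝 0) := by
  simpa only [one_div, Pi.inv_def] using
    (tendsto_atTop_add_const_left _ c tendsto_natCast_atTop_atTop).inv_tendsto_atTop

lemma tendsto_digamma_add_nat_sub_of_le {x y : ℝ} (hx : 0 < x) (hxy : x ≤ y) :
    Tendsto (fun n : ℕ => digamma (y + n) - digamma (x + n)) atTop (𝓝 0) := by
  obtain ⟨m, hm⟩ := exists_nat_ge (y - x)
  have hpos : ∀ z : ℝ, 0 < z → ∀ n : ℕ, z + n ∈ Ioi (0 : ℝ) := fun z hz n =>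
    mem_Ioi.2 (by positivity)
  have hlower : ∀ n : ℕ, 0 ≤ digamma (y + n) - digamma (x + n) := fun n =>
    sub_nonneg.2 <| monotoneOn_digamma (hpos x hx n) (hpos y (hx.trans_le hxy) n) (by linarith)
  have hupper : ∀ n : ℕ, digamma (y + n) - digamma (x + n) ≤
      ∑ k ∈ Finset.range m, 1 / (x + n + k) := by
    intro n
    have hle := monotoneOn_digamma (hpos y (hx.trans_le hxy) n) (hpos (x + n) (by positivity) m)
      (by linarith)
    rw [digamma_add_nat (x := x + n) (by positivity)] at hle
    linarith
  have hsum : Tendsto (fun n : ℕ => ∑ k ∈ Finset.range m, 1 / (x + n + k)) atTop (𝓝 0) := by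
    simpa using tendsto_finsetSum (Finset.range m) fun k _ =>
      (tendsto_one_div_add_nat (x + k)).congr fun n => by ring_nf
  exact tendsto_of_tendsto_of_tendsto_of_le_of_le tendsto_const_nhds hsum hlower hupper

lemma tendsto_digamma_add_nat_sub {x y : ℝ} (hx : 0 < x) (hy : 0 < y) :
    Tendsto (fun n : ℕ => digamma (y + n) - digamma (x + n)) atTop (𝓝 0) := by
  rcases le_total x y with hxy | hyx
  · exact tendsto_digamma_add_nat_sub_of_le hx hxy
  · simpa using (tendsto_digamma_add_nat_sub_of_le hy hyx).neg

lemma tendsto_sum_range_one_div_sub_one_div {x y : ℝ} (hx : 0 < x) (hy : 0 < y) :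
    Tendsto (fun n : ℕ => ∑ k ∈ Finset.range n, (1 / (x + k) - 1 / (y + k))) atTop
      (𝓝 (digamma y - digamma x)) := by
  have hpartial : ∀ n : ℕ, ∑ k ∈ Finset.range n, (1 / (x + k) - 1 / (y + k)) =
      (digamma y - digamma x) - (digamma (y + n) - digamma (x + n)) := by
    intro n
    rw [Finset.sum_sub_distrib, digamma_add_nat hx, digamma_add_nat hy]
    ring
  simpa only [hpartial, sub_zero] using
    tendsto_const_nhds.sub (tendsto_digamma_add_nat_sub hx hy)

lemma digamma_sub_digamma_le_of_forall {x y x' y' : ℝ} (hx : 0 < x) (hy : 0 < y) (hx' : 0 < x')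
    (hy' : 0 < y') (h : ∀ k : ℕ, 1 / (x' + k) - 1 / (y' + k) ≤ 1 / (x + k) - 1 / (y + k)) :
    digamma y' - digamma x' ≤ digamma y - digamma x :=
  le_of_tendsto_of_tendsto' (tendsto_sum_range_one_div_sub_one_div hx' hy')
    (tendsto_sum_range_one_div_sub_one_div hx hy) fun _ => Finset.sum_le_sum fun k _ => h k

lemma one_div_sub_one_div_half_le {t a b : ℝ} (ht : 0 < t) (hta : 0 < t + a) (hab : a ≤ b)
    (hprod : a * b ≤ 2 * t ^ 2) :
    1 / (t + a / 2) - 1 / (t + b / 2) ≤ 1 / (t + a) - 1 / (t + b) := by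
  have htb : 0 < t + b := by linarith
  have hta2 : 0 < t + a / 2 := by linarith
  have htb2 : 0 < t + b / 2 := by linarith
  rw [div_sub_div _ _ hta2.ne' htb2.ne', div_sub_div _ _ hta.ne' htb.ne',
    div_le_div_iff₀ (by positivity) (by positivity)]
  nlinarith [mul_nonneg (sub_nonneg.2 hab) (sub_nonneg.2 hprod)]

lemma monotoneOn_digamma_one_add_sub_digamma_one_add_half :
    MonotoneOn (fun α : ℝ => digamma (1 + α) - digamma (1 + α / 2)) (Ioo (-1) 1) := by
  rintro a ⟨ha, ha'⟩ b ⟨hb, hb'⟩ hab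
  have hab1 : a * b < 1 := by
    nlinarith [mul_pos (sub_pos.2 ha') (sub_pos.2 hb'),
      mul_pos (by linarith : 0 < 1 + a) (by linarith : 0 < 1 + b)]
  have hcompare :
      digamma (1 + b / 2) - digamma (1 + a / 2) ≤ digamma (1 + b) - digamma (1 + a) := by
    refine digamma_sub_digamma_le_of_forall (by linarith) (by linarith) (by linarith)
      (by linarith) fun k => ?_
    have hk : (0 : ℝ) ≤ k := k.cast_nonneg
    convert one_div_sub_one_div_half_le (t := 1 + k) (by positivity) (by linarith) hab
      (by nlinarith) using 3 <;> ring
  dsimp only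
  linarith

theorem stmt_16 :
    StrictMonoOn (fun α : ℝ => digamma (1 + α) - digamma (1 + α / 2) - 1 / (2 + α))
      (Set.Ioo (-1 : ℝ) 1) := by
  intro a ha b hb hab
  have hmono := monotoneOn_digamma_one_add_sub_digamma_one_add_half ha hb hab.le
  have hrecip : 1 / (2 + b) < 1 / (2 + a) :=
    one_div_lt_one_div_of_lt (by linarith [ha.1]) (by linarith)
  simp only at hmono ⊢
  linarith
end

section
/- For each fixed integer k ≥ 1, the function α ↦ Γ(1+α)/(Γ(1+α/2)Γ(k+1+α/2)) is strictly decreasing on (-1, 0.8). -/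
/-!
Put `s = (1 + α) / 2`. Legendre's duplication formula turns the `k = 1` ratio into
`4 ^ s * Γ(s) / Γ(s + 3/2) / (2 √π)`. By Euler's limit formula, `Γ(s) / Γ(s + 3/2)` is the limit
of `n ^ (-3/2) * ∏_{j ≤ n} (s + 3/2 + j) / (s + j)`, and on `(0, 9/10]` the logarithmic derivative
of the `j`-th factor is at most `-a_j` with `a_j = (3/2) / ((9/10 + j) (9/10 + j + 3/2))`. Hence,
with `S = ∑_{j < 71} a_j`, the function `exp (S s) * Γ(s) / Γ(s + 3/2)` is a limit of products of
positive nonincreasing functions, so it is nonincreasing. As `S > log 4`,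
`4 ^ s * Γ(s) / Γ(s + 3/2) = exp (-(S - log 4) s) * (exp (S s) * Γ(s) / Γ(s + 3/2))` is strictly
decreasing. Passing from `k` to `k + 1` multiplies the ratio by the positive decreasing factor
`1 / (k + 1 + α / 2)`.
-/

open Real Set Filter Topology Finset

theorem antitoneOn_exp_mul_mul_add_div_add {a b c d : ℝ} (ha : 0 ≤ a) (hc : 0 ≤ c) (hd : 0 ≤ d)
    (habcd : a * ((b + c) * (b + c + d)) ≤ d) :
    AntitoneOn (fun s => exp (a * s) * ((s + d + c) / (s + c))) (Ioc 0 b) := by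
  refine antitoneOn_of_hasDerivWithinAt_nonpos (convex_Ioc 0 b) ?_ (fun s hs => ?_) ?_
    (f' := fun s => exp (a * s) * (a * ((s + d + c) * (s + c)) - d) / (s + c) ^ 2)
  · refine ContinuousOn.mul (by fun_prop) (ContinuousOn.div (by fun_prop) (by fun_prop) ?_)
    intro s hs
    exact (add_pos_of_pos_of_nonneg hs.1 hc).ne'
  · rw [interior_Ioc] at hs
    have hsc : s + c ≠ 0 := (add_pos_of_pos_of_nonneg hs.1 hc).ne'
    have h : HasDerivAt (fun s => exp (a * s) * ((s + d + c) / (s + c))) _ s :=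
      ((hasDerivAt_id' s).const_mul a).exp.mul
        ((((hasDerivAt_id' s).add_const d).add_const c).div ((hasDerivAt_id' s).add_const c) hsc)
    refine (h.congr_deriv ?_).hasDerivWithinAt
    field_simp
    ring
  · intro s hs
    rw [interior_Ioc] at hs
    obtain ⟨hs0, hsb⟩ := hs
    have hsc : 0 < s + c := by linarith
    apply div_nonpos_of_nonpos_of_nonneg _ (by positivity)
    apply mul_nonpos_of_nonneg_of_nonpos (exp_pos _).le
    have : (s + d + c) * (s + c) ≤ (b + c) * (b + c + d) := by nlinarith
    nlinarith

theorem antitoneOn_exp_sum_mul_prod {a : ℕ → ℝ} {b d : ℝ} (t : Finset ℕ) (ha : ∀ j ∈ t, 0 ≤ a j)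
    (hd : 0 ≤ d) (habd : ∀ j ∈ t, a j * ((b + j) * (b + j + d)) ≤ d) :
    AntitoneOn (fun s => exp ((∑ j ∈ t, a j) * s) * ∏ j ∈ t, (s + d + j) / (s + j))
      (Ioc 0 b) := by
  intro x hx y hy hxy
  simp only [sum_mul, exp_sum, ← prod_mul_distrib]
  refine prod_le_prod (fun j _ => ?_) (fun j hj => ?_)
  · have : 0 < y + j := by linarith [hy.1, (Nat.cast_nonneg j : (0:ℝ) ≤ j)]
    exact mul_nonneg (exp_pos _).le (div_nonneg (by linarith) this.le)
  · exact antitoneOn_exp_mul_mul_add_div_add (ha j hj) (Nat.cast_nonneg j) hd (habd j hj) hx hy hxy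

theorem GammaSeq_div_GammaSeq_add {n : ℕ} (hn : n ≠ 0) (s d : ℝ) :
    GammaSeq s n / GammaSeq (s + d) n
      = (n : ℝ) ^ (-d) * ∏ j ∈ range (n + 1), (s + d + j) / (s + j) := by
  have hn' : (0 : ℝ) < n := by positivity
  simp only [GammaSeq, prod_div_distrib, rpow_add hn', rpow_neg hn'.le]
  have : (n.factorial : ℝ) ≠ 0 := by positivity
  have : (n : ℝ) ^ s ≠ 0 := by positivity
  have : (n : ℝ) ^ d ≠ 0 := by positivity
  field_simp

theorem tendsto_rpow_neg_mul_prod_div {s d : ℝ} (h : Gamma (s + d) ≠ 0) :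
    Tendsto (fun n : ℕ => (n : ℝ) ^ (-d) * ∏ j ∈ range (n + 1), (s + d + j) / (s + j)) atTop
      (𝓝 (Gamma s / Gamma (s + d))) := by
  refine ((GammaSeq_tendsto_Gamma s).div (GammaSeq_tendsto_Gamma (s + d)) h).congr' ?_
  filter_upwards [eventually_ne_atTop 0] with n hn
  exact GammaSeq_div_GammaSeq_add hn s d

theorem two_mul_log_two_lt_sum :
    2 * log 2 < ∑ j ∈ range 71, (3 / 2) / ((9 / 10 + j) * (9 / 10 + j + 3 / 2) : ℝ) := by
  have : (1.3862943617 : ℝ)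
      ≤ ∑ j ∈ range 71, (3 / 2) / ((9 / 10 + j) * (9 / 10 + j + 3 / 2) : ℝ) := by
    norm_num [sum_range_succ]
  linarith [log_two_lt_d9]

theorem antitoneOn_exp_mul_Gamma_div_Gamma_add {b d : ℝ} (hb : 0 < b) (hd : 0 ≤ d) (N : ℕ) :
    AntitoneOn
      (fun s => exp ((∑ j ∈ range N, d / ((b + j) * (b + j + d))) * s) * (Gamma s / Gamma (s + d)))
      (Ioc 0 b) := by
  set S := ∑ j ∈ range N, d / ((b + j) * (b + j + d))
  -- the weights vanish beyond `N`, so all partial products `n ≥ N` carry the same exponential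
  set a : ℕ → ℝ := fun j => if j ∈ range N then d / ((b + j) * (b + j + d)) else 0
  have hbj (j : ℕ) : 0 < (b + j) * (b + j + d) := by
    have : 0 < b + j := by positivity
    positivity
  have ha (j : ℕ) : 0 ≤ a j := by
    simp only [a]
    split_ifs
    exacts [div_nonneg hd (hbj j).le, le_rfl]
  have habd (j : ℕ) : a j * ((b + j) * (b + j + d)) ≤ d := by
    simp only [a]
    split_ifs
    exacts [(div_mul_cancel₀ d (hbj j).ne').le, by simpa using hd]
  have hsum {n : ℕ} (hn : N ≤ n + 1) : ∑ j ∈ range (n + 1), a j = S := by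
    simp only [a, S, sum_ite_mem, Finset.inter_eq_right.2 (range_subset_range.2 hn)]
  have hlim {s : ℝ} (hs : s ∈ Ioc 0 b) : Tendsto
      (fun n : ℕ => exp (S * s) * ((n : ℝ) ^ (-d) * ∏ j ∈ range (n + 1), (s + d + j) / (s + j)))
      atTop (𝓝 (exp (S * s) * (Gamma s / Gamma (s + d)))) :=
    (tendsto_rpow_neg_mul_prod_div (Gamma_pos_of_pos (by linarith [hs.1])).ne').const_mul _
  intro x hx y hy hxy
  refine le_of_tendsto_of_tendsto (hlim hy) (hlim hx) ?_
  filter_upwards [eventually_ge_atTop N] with n hn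
  have h := antitoneOn_exp_sum_mul_prod (range (n + 1)) (fun j _ => ha j) hd (fun j _ => habd j)
    hx hy hxy
  rw [hsum (by omega)] at h
  rw [mul_left_comm, mul_left_comm (exp _)]
  exact mul_le_mul_of_nonneg_left h (by positivity)

theorem StrictAntiOn.mul_antitoneOn {α β : Type*} [Preorder α] [Mul β] [Zero β] [Preorder β]
    [PosMulMono β] [MulPosStrictMono β] {f g : α → β} {s : Set α} (hf : StrictAntiOn f s)
    (hg : AntitoneOn g s) (hf₀ : ∀ x ∈ s, 0 ≤ f x) (hg₀ : ∀ x ∈ s, 0 < g x) :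
    StrictAntiOn (fun x => f x * g x) s := fun x hx y hy hxy =>
  calc f y * g y < f x * g y := mul_lt_mul_of_pos_right (hf hx hy hxy) (hg₀ y hy)
    _ ≤ f x * g x := mul_le_mul_of_nonneg_left (hg hx hy hxy.le) (hf₀ x hx)

theorem strictAntiOn_two_rpow_mul_Gamma_div_Gamma_add_three_halves :
    StrictAntiOn (fun s => (2 : ℝ) ^ (2 * s) * (Gamma s / Gamma (s + 3 / 2))) (Ioc 0 (9 / 10)) := by
  have hF := antitoneOn_exp_mul_Gamma_div_Gamma_add (b := 9 / 10) (d := 3 / 2) (by norm_num)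
    (by norm_num) 71
  set S := ∑ j ∈ range 71, (3 / 2) / ((9 / 10 + j) * (9 / 10 + j + 3 / 2) : ℝ)
  have hS : 2 * log 2 < S := two_mul_log_two_lt_sum
  have hE : StrictAntiOn (fun s => exp ((2 * log 2 - S) * s)) (Ioc 0 (9 / 10)) :=
    fun x _ y _ hxy => exp_lt_exp.2 (by nlinarith)
  refine (hE.mul_antitoneOn hF (fun _ _ => (exp_pos _).le) fun s hs => ?_).congr fun s _ => ?_
  · have := Gamma_pos_of_pos hs.1
    have := Gamma_pos_of_pos (by linarith [hs.1] : 0 < s + 3 / 2)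
    positivity
  · dsimp only
    rw [← mul_assoc, ← exp_add, rpow_def_of_pos two_pos]
    ring_nf

theorem Gamma_two_mul_div_Gamma_mul_Gamma {s : ℝ} (hs : 0 < s) :
    Gamma (2 * s) / (Gamma (s + 1 / 2) * Gamma (s + 3 / 2))
      = (2 : ℝ) ^ (2 * s) * (Gamma s / Gamma (s + 3 / 2)) / (2 * √π) := by
  have hdup := Gamma_mul_Gamma_add_half s
  have h₁ := Gamma_pos_of_pos (by linarith : 0 < s + 1 / 2)
  have h₂ := Gamma_pos_of_pos (by linarith : 0 < s + 3 / 2)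
  have hπ := sqrt_pos.2 pi_pos
  have hpow : (2 : ℝ) ^ (1 - 2 * s) * 2 ^ (2 * s) = 2 := by
    rw [← rpow_add two_pos]; norm_num
  have key : 2 * √π * Gamma (2 * s) = 2 ^ (2 * s) * (Gamma s * Gamma (s + 1 / 2)) := by
    linear_combination (-2 ^ (2 * s) : ℝ) * hdup - Gamma (2 * s) * √π * hpow
  generalize Gamma (s + 1 / 2) = A, Gamma (s + 3 / 2) = B at *
  field_simp
  linear_combination key

noncomputable def gammaRatio (κ α : ℝ) : ℝ :=
  Gamma (1 + α) / (Gamma (1 + α / 2) * Gamma (κ + 1 + α / 2))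

theorem strictAntiOn_gammaRatio_one : StrictAntiOn (gammaRatio 1) (Ioo (-1) 0.8) := by
  have hg := strictAntiOn_two_rpow_mul_Gamma_div_Gamma_add_three_halves
  have hdup {α : ℝ} (hα : -1 < α) : gammaRatio 1 α
      = (2 : ℝ) ^ (2 * ((1 + α) / 2)) * (Gamma ((1 + α) / 2) / Gamma ((1 + α) / 2 + 3 / 2))
        / (2 * √π) := by
    rw [← Gamma_two_mul_div_Gamma_mul_Gamma (by linarith), gammaRatio]
    ring_nf
  intro x hx y hy hxy
  rw [hdup hx.1, hdup hy.1]
  refine div_lt_div_of_pos_right (hg ⟨?_, ?_⟩ ⟨?_, ?_⟩ ?_) (by positivity)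
  all_goals norm_num at hx hy ⊢; linarith

theorem StrictAntiOn.gammaRatio_add_one {κ c : ℝ} (hκ : 0 ≤ κ)
    (h : StrictAntiOn (gammaRatio κ) (Ioo (-1) c)) :
    StrictAntiOn (gammaRatio (κ + 1)) (Ioo (-1) c) := by
  have hpos {α : ℝ} (hα : α ∈ Ioo (-1) c) : 0 < κ + 1 + α / 2 := by linarith [hα.1]
  have hanti : AntitoneOn (fun α => (κ + 1 + α / 2)⁻¹) (Ioo (-1) c) :=
    fun x hx y _ hxy => inv_anti₀ (hpos hx) (by linarith)
  refine (h.mul_antitoneOn hanti (fun α hα => ?_) fun α hα => inv_pos.2 (hpos hα)).congr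
    fun α hα => ?_
  · have := Gamma_pos_of_pos (by linarith [hα.1] : 0 < 1 + α)
    have := Gamma_pos_of_pos (by linarith [hα.1] : 0 < 1 + α / 2)
    have := Gamma_pos_of_pos (hpos hα)
    exact (div_pos ‹_› (mul_pos ‹_› ‹_›)).le
  · dsimp only [gammaRatio]
    rw [show κ + 1 + 1 + α / 2 = (κ + 1 + α / 2) + 1 by ring,
      Gamma_add_one (hpos hα).ne']
    simp only [div_eq_mul_inv, mul_inv]
    ring

theorem stmt_18 (k : ℕ) (hk : 1 ≤ k) :
    StrictAntiOn
      (fun α : ℝ => Real.Gamma (1 + α) /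
        (Real.Gamma (1 + α / 2) * Real.Gamma ((k : ℝ) + 1 + α / 2)))
      (Set.Ioo (-1 : ℝ) 0.8) := by
  show StrictAntiOn (gammaRatio k) _
  induction k, hk using Nat.le_induction with
  | base => exact_mod_cast strictAntiOn_gammaRatio_one
  | succ k _ ih => exact_mod_cast ih.gammaRatio_add_one k.cast_nonneg
end
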